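/- arXiv:math/0110181 — 7 statements merged into one kernel-verified Lean document; each statement's English description precedes it below -/
import Mathlib

section
/- Fix integers k ≥ 1 and m ≥ 0. For every n ≥ 1, the number of compositions of n in which the part size k has multiplicity exactly m equals the coefficient of z^n in the formal power series z^{km}(1−z)^{m+1} · (1 − 2z + z^k(1−z))^{-(m+1)} over ℚ (the denominator has constant term 1, hence is invertible in ℚ[[z]]). -/
/-!
Splitting off the first part of a composition shows that the generating functions `C_m` of the
compositions in which `k` has multiplicity `m` satisfy `C_0 = 1 + S C_0` and
`C_{m+1} = S C_{m+1} + z^k C_m`, where `S = z/(1-z) - z^k` accounts for a first part other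
than `k`. Hence `C_m = z^{km} (1 - S)^{-(m+1)}`, and `(1 - z)(1 - S) = 1 - 2z + z^k(1 - z)`.
-/

open PowerSeries Finset

namespace Composition

theorem blocks_ne_nil {n : ℕ} (c : Composition (n + 1)) : c.blocks ≠ [] :=
  fun h => n.succ_ne_zero (c.blocks_eq_nil.1 h)

theorem head_blocks_pos {n : ℕ} (c : Composition (n + 1)) : 0 < c.blocks.head c.blocks_ne_nil :=
  c.blocks_pos (List.head_mem _)

theorem head_blocks_add_sum_tail {n : ℕ} (c : Composition (n + 1)) :
    c.blocks.head c.blocks_ne_nil + c.blocks.tail.sum = n + 1 := by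
  rw [← List.sum_cons, List.cons_head_tail, c.blocks_sum]

def cons {n : ℕ} (a : ℕ) (ha : 0 < a) (c : Composition n) : Composition (a + n) where
  blocks := a :: c.blocks
  blocks_pos := by
    simp only [List.mem_cons, forall_eq_or_imp]
    exact ⟨ha, fun _ => c.blocks_pos⟩
  blocks_sum := by simp [c.blocks_sum]

def consEquiv (n : ℕ) : (Σ i : Fin (n + 1), Composition (n - i)) ≃ Composition (n + 1) where
  toFun p := (cons (p.1 + 1) p.1.succ_pos p.2).cast (by omega)
  invFun c :=
    ⟨⟨c.blocks.head c.blocks_ne_nil - 1, by have := c.head_blocks_add_sum_tail; omega⟩,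
      ⟨c.blocks.tail, fun h => c.blocks_pos (List.mem_of_mem_tail h), by
        have := c.head_blocks_add_sum_tail
        have := c.head_blocks_pos
        simp only
        omega⟩⟩
  left_inv _ := rfl
  right_inv c := by
    have := c.head_blocks_pos
    ext1
    conv_rhs => rw [← List.cons_head_tail c.blocks_ne_nil]
    simp only [cons, Composition.cast]
    congr 1
    omega

theorem card_subtype_zero (p : List ℕ → Prop) [DecidablePred p] :
    Nat.card {c : Composition 0 // p c.blocks} = if p [] then 1 else 0 := by
  have hnil (c : Composition 0) : c.blocks = [] := c.blocks_eq_nil.2 rfl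
  simp only [Nat.card_eq_fintype_card, Fintype.card_subtype, card_filter]
  rw [Fintype.sum_eq_single (ones 0) fun c hc => (hc (Composition.ext (by simp [hnil]))).elim]
  simp [hnil]

theorem card_subtype_succ (n : ℕ) (p : List ℕ → Prop) [DecidablePred p] :
    Nat.card {c : Composition (n + 1) // p c.blocks} =
      ∑ i ∈ range (n + 1), Nat.card {c : Composition (n - i) // p ((i + 1) :: c.blocks)} := by
  simp only [Nat.card_eq_fintype_card, Fintype.card_subtype, card_filter]
  rw [← (consEquiv n).sum_comp, Fintype.sum_sigma]
  exact Fin.sum_univ_eq_sum_range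
    (fun i => ∑ c : Composition (n - i), if p ((i + 1) :: c.blocks) then 1 else 0) _

end Composition

theorem PowerSeries.coeff_succ_mul_of_constantCoeff_eq_zero {R : Type*} [Semiring R]
    {g : R⟦X⟧} (hg : constantCoeff g = 0) (f : R⟦X⟧) (n : ℕ) :
    coeff (n + 1) (g * f) = ∑ i ∈ range (n + 1), coeff (i + 1) g * coeff (n - i) f := by
  rw [coeff_mul, Nat.sum_antidiagonal_eq_sum_range_succ (fun i j => coeff i g * coeff j f),
    sum_range_succ', coeff_zero_eq_constantCoeff_apply, hg, zero_mul, add_zero]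
  simp

section

variable (R : Type*) [CommRing R] (k : ℕ)

noncomputable def multiplicitySeries (m : ℕ) : R⟦X⟧ :=
  mk fun n => Nat.card {c : Composition n // c.blocks.count k = m}

noncomputable def partsExceptSeries : R⟦X⟧ := X * PowerSeries.mk 1 - X ^ k

variable {R k}

theorem constantCoeff_partsExceptSeries (hk : k ≠ 0) :
    constantCoeff (partsExceptSeries R k) = 0 := by
  simp [partsExceptSeries, hk]

theorem coeff_succ_partsExceptSeries (i : ℕ) :
    coeff (i + 1) (partsExceptSeries R k) = 1 - if i + 1 = k then 1 else 0 := by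
  simp [partsExceptSeries, coeff_succ_X_mul, coeff_X_pow]

theorem one_sub_X_mul_one_sub_partsExceptSeries :
    (1 - X) * (1 - partsExceptSeries R k) = 1 - 2 * X + X ^ k * (1 - X) := by
  rw [partsExceptSeries]
  linear_combination (-X : R⟦X⟧) * mk_one_mul_one_sub_eq_one (S := R)

theorem constantCoeff_multiplicitySeries (m : ℕ) :
    constantCoeff (multiplicitySeries R k m) = if m = 0 then 1 else 0 := by
  rw [← coeff_zero_eq_constantCoeff_apply, multiplicitySeries, coeff_mk,
    Composition.card_subtype_zero (fun l => l.count k = m)]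
  simp [eq_comm]

theorem coeff_succ_multiplicitySeries_zero (n : ℕ) :
    coeff (n + 1) (multiplicitySeries R k 0) = ∑ i ∈ range (n + 1),
      if i + 1 = k then 0 else coeff (n - i) (multiplicitySeries R k 0) := by
  simp only [multiplicitySeries, coeff_mk,
    Composition.card_subtype_succ n (fun l => l.count k = 0), Nat.cast_sum]
  refine sum_congr rfl fun i _ => ?_
  by_cases h : i + 1 = k <;> simp [h]

theorem coeff_succ_multiplicitySeries_succ (m n : ℕ) :
    coeff (n + 1) (multiplicitySeries R k (m + 1)) = ∑ i ∈ range (n + 1),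
      if i + 1 = k then coeff (n - i) (multiplicitySeries R k m)
      else coeff (n - i) (multiplicitySeries R k (m + 1)) := by
  simp only [multiplicitySeries, coeff_mk,
    Composition.card_subtype_succ n (fun l => l.count k = m + 1), Nat.cast_sum]
  refine sum_congr rfl fun i _ => ?_
  by_cases h : i + 1 = k <;> simp [h]

theorem multiplicitySeries_zero_mul (hk : k ≠ 0) :
    multiplicitySeries R k 0 * (1 - partsExceptSeries R k) = 1 := by
  ext (_ | n)
  · simp [constantCoeff_multiplicitySeries, constantCoeff_partsExceptSeries hk]
  rw [mul_sub, mul_one, map_sub, mul_comm,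
    coeff_succ_mul_of_constantCoeff_eq_zero (constantCoeff_partsExceptSeries hk),
    coeff_succ_multiplicitySeries_zero, ← sum_sub_distrib, coeff_one, if_neg n.succ_ne_zero]
  refine sum_eq_zero fun i _ => ?_
  rw [coeff_succ_partsExceptSeries]
  by_cases h : i + 1 = k <;> simp [h]

theorem multiplicitySeries_succ_mul (hk : k ≠ 0) (m : ℕ) :
    multiplicitySeries R k (m + 1) * (1 - partsExceptSeries R k) =
      X ^ k * multiplicitySeries R k m := by
  ext (_ | n)
  · simp [constantCoeff_multiplicitySeries, constantCoeff_partsExceptSeries hk, hk]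
  rw [mul_sub, mul_one, map_sub, mul_comm,
    coeff_succ_mul_of_constantCoeff_eq_zero (constantCoeff_partsExceptSeries hk),
    coeff_succ_mul_of_constantCoeff_eq_zero (by simp [hk]), coeff_succ_multiplicitySeries_succ,
    ← sum_sub_distrib]
  refine sum_congr rfl fun i _ => ?_
  rw [coeff_succ_partsExceptSeries, coeff_X_pow]
  by_cases h : i + 1 = k <;> simp [h]

theorem multiplicitySeries_mul_pow (hk : k ≠ 0) (m : ℕ) :
    multiplicitySeries R k m * (1 - 2 * X + X ^ k * (1 - X)) ^ (m + 1) =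
      X ^ (k * m) * (1 - X) ^ (m + 1) := by
  rw [← one_sub_X_mul_one_sub_partsExceptSeries]
  induction m with
  | zero => linear_combination (1 - X) * multiplicitySeries_zero_mul (R := R) hk
  | succ m ih =>
    linear_combination (1 - X) * ((1 - X) * (1 - partsExceptSeries R k)) ^ (m + 1) *
      multiplicitySeries_succ_mul (R := R) hk m + X ^ k * (1 - X) * ih

theorem multiplicitySeries_eq {K : Type*} [Field K] (hk : k ≠ 0) (m : ℕ) :
    multiplicitySeries K k m =
      X ^ (k * m) * (1 - X) ^ (m + 1) * ((1 - 2 * X + X ^ k * (1 - X)) ^ (m + 1))⁻¹ := by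
  rw [PowerSeries.eq_mul_inv_iff_mul_eq (by simp [hk])]
  exact multiplicitySeries_mul_pow hk m

end

theorem count_compositions_multiplicity_eq_coeff_general (k m : ℕ) (hk : 1 ≤ k) (n : ℕ) :
    (Nat.card {κ : Composition n // κ.blocks.count k = m} : ℚ) =
      PowerSeries.coeff n
        (X ^ (k * m) * (1 - X) ^ (m + 1) *
          (((1 - 2 * X + X ^ k * (1 - X) : PowerSeries ℚ)) ^ (m + 1))⁻¹) := by
  rw [← multiplicitySeries_eq (by omega), multiplicitySeries, coeff_mk]

/-- **Lemma 1.** For fixed `k ≥ 1` and `m ≥ 0`, the number of compositions of `n ≥ 1` in which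
the part size `k` has multiplicity exactly `m` is the coefficient of `z^n` in
`z^{km}(1−z)^{m+1} (1 − 2z + z^k(1−z))^{-(m+1)}` in `ℚ[[z]]`. -/
theorem count_compositions_multiplicity_eq_coeff (k m : ℕ) (hk : 1 ≤ k) (n : ℕ) (hn : 1 ≤ n) :
    (Nat.card {κ : Composition n // κ.blocks.count k = m} : ℚ) =
      PowerSeries.coeff n
        (X ^ (k * m) * (1 - X) ^ (m + 1) *
          (((1 - 2 * X + X ^ k * (1 - X) : PowerSeries ℚ)) ^ (m + 1))⁻¹) :=
  count_compositions_multiplicity_eq_coeff_general k m hk n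
end

section
/- Fix an integer k ≥ 1. In the ring of formal power series ℚ[[z,w]] in two variables, Σ_{n≥1} Σ_{j≥0} c_k(n,j) z^n w^j = (z + (w−1)z^k(1−z)) · (1 − 2z − (w−1)z^k(1−z))^{-1}, where c_k(n,j) is the number of compositions of n in which the part size k has multiplicity exactly j (the denominator has constant term 1, hence is invertible). -/
/-!
Let `G = Σ c_k(n, j) zⁿ wʲ`, counting the empty composition as the constant term. Splitting off
the first part `m` of a composition multiplies by `z^m`, and by `w` exactly when `m = k`, so
`G = 1 + (z / (1 - z) + (w - 1) zᵏ) G`. Clearing the denominator `1 - z` gives `G D = 1 - z` for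
the denominator `D` of the theorem, i.e. `(G - 1) D = z + (w - 1) zᵏ (1 - z)`.
-/

open MvPowerSeries Finset

theorem Finset.sum_Icc_one_tsub {M : Type*} [AddCommMonoid M] (f : ℕ → M) (n : ℕ) :
    ∑ m ∈ Icc 1 n, f (n - m) = ∑ i ∈ range n, f i :=
  sum_nbij' (n - ·) (n - ·) (by intro m; simp only [mem_Icc, mem_range]; omega)
    (by intro i; simp only [mem_Icc, mem_range]; omega)
    (by intro m; simp only [mem_Icc]; omega) (by intro i; simp only [mem_range]; omega)
    (fun _ _ => rfl)

namespace MvPowerSeries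

variable {R : Type*} [CommSemiring R]

theorem ext_fin_two {φ ψ : MvPowerSeries (Fin 2) R}
    (h : ∀ n j, coeff (Finsupp.single (0 : Fin 2) n + Finsupp.single 1 j) φ =
      coeff (Finsupp.single (0 : Fin 2) n + Finsupp.single 1 j) ψ) :
    φ = ψ :=
  ext fun d => by
    rw [show d = Finsupp.single 0 (d 0) + Finsupp.single 1 (d 1) by ext i; fin_cases i <;> simp]
    exact h _ _

theorem coeff_one_fin_two (n j : ℕ) :
    coeff (Finsupp.single (0 : Fin 2) n + Finsupp.single 1 j) (1 : MvPowerSeries (Fin 2) R) =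
      if n = 0 ∧ j = 0 then 1 else 0 := by
  simp [coeff_one]

theorem coeff_X_zero_pow_mul (φ : MvPowerSeries (Fin 2) R) (a n j : ℕ) :
    coeff (Finsupp.single (0 : Fin 2) n + Finsupp.single 1 j) (X 0 ^ a * φ) =
      if a ≤ n then coeff (Finsupp.single 0 (n - a) + Finsupp.single 1 j) φ else 0 := by
  have hle :
      Finsupp.single (0 : Fin 2) a ≤ Finsupp.single 0 n + Finsupp.single 1 j ↔ a ≤ n := by
    simp [Finsupp.le_def, Fin.forall_fin_two]
  have hsub : Finsupp.single (0 : Fin 2) n + Finsupp.single 1 j - Finsupp.single 0 a =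
      Finsupp.single 0 (n - a) + Finsupp.single 1 j := by
    ext i; fin_cases i <;> simp
  rw [X_pow_eq, coeff_monomial_mul, one_mul, hsub]
  simp only [hle]

theorem coeff_X_one_mul (φ : MvPowerSeries (Fin 2) R) (n j : ℕ) :
    coeff (Finsupp.single (0 : Fin 2) n + Finsupp.single 1 j) (X 1 * φ) =
      if 1 ≤ j then coeff (Finsupp.single 0 n + Finsupp.single 1 (j - 1)) φ else 0 := by
  have hle :
      Finsupp.single (1 : Fin 2) 1 ≤ Finsupp.single 0 n + Finsupp.single 1 j ↔ 1 ≤ j := by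
    simp [Finsupp.le_def, Fin.forall_fin_two]
  have hsub : Finsupp.single (0 : Fin 2) n + Finsupp.single 1 j - Finsupp.single 1 1 =
      Finsupp.single 0 n + Finsupp.single 1 (j - 1) := by
    ext i; fin_cases i <;> simp
  rw [X, coeff_monomial_mul, one_mul, hsub]
  simp only [hle]

end MvPowerSeries

namespace Composition

theorem blocks_eq_headI_cons_tail {n : ℕ} (hn : 0 < n) (c : Composition n) :
    c.blocks = c.blocks.headI :: c.blocks.tail :=
  (List.cons_head!_tail (by rwa [ne_eq, c.blocks_eq_nil, ← ne_eq, ← Nat.pos_iff_ne_zero])).symm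

theorem sum_eq_sum_Icc_sum_cons {M : Type*} [AddCommMonoid M] {n : ℕ} (hn : 0 < n)
    (f : List ℕ → M) :
    ∑ c : Composition n, f c.blocks =
      ∑ m ∈ Icc 1 n, ∑ c : Composition (n - m), f (m :: c.blocks) := by
  have head_tail (c : Composition n) := c.blocks_eq_headI_cons_tail hn
  have head_pos (c : Composition n) : 0 < c.blocks.headI :=
    c.blocks_pos ((head_tail c).symm ▸ List.mem_cons_self)
  have sum_head_tail (c : Composition n) : c.blocks.headI + c.blocks.tail.sum = n := by
    rw [← List.sum_cons, ← head_tail, c.blocks_sum]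
  rw [sum_sigma']
  refine sum_bij' (fun c _ => ⟨c.blocks.headI, c.blocks.tail,
      fun h => c.blocks_pos (List.mem_of_mem_tail h), by have := sum_head_tail c; omega⟩)
    (fun p hp => ⟨p.1 :: p.2.blocks, ?_, ?_⟩) ?_ ?_ ?_ ?_ ?_
  · intro i hi
    rcases List.mem_cons.1 hi with rfl | hi
    · exact (mem_Icc.1 (mem_sigma.1 hp).1).1
    · exact p.2.blocks_pos hi
  · have := (mem_Icc.1 (mem_sigma.1 hp).1).2
    rw [List.sum_cons, p.2.blocks_sum]; omega
  · intro c _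
    have := head_pos c
    have := sum_head_tail c
    simp only [mem_sigma, mem_Icc, mem_univ, and_true]; omega
  · intro p _; simp
  · intro c _; exact Composition.ext (head_tail c).symm
  · rintro ⟨m, c⟩ _; rfl
  · intro c _; rw [← head_tail]

/-- `c_k(n, j)`. -/
noncomputable def cardWithCount (k n j : ℕ) : ℕ :=
  Nat.card {c : Composition n // c.blocks.count k = j}

theorem cardWithCount_eq_sum (k n j : ℕ) :
    cardWithCount k n j = ∑ c : Composition n, if c.blocks.count k = j then 1 else 0 := by
  classical
  rw [cardWithCount, Nat.card_eq_fintype_card, Fintype.card_subtype, sum_boole, Nat.cast_id]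

theorem cardWithCount_zero (k j : ℕ) : cardWithCount k 0 j = if j = 0 then 1 else 0 := by
  have h (c : Composition 0) : c.blocks.count k = 0 := by rw [c.blocks_eq_nil.2 rfl]; rfl
  simp only [cardWithCount_eq_sum, h, sum_const, card_univ, composition_card, eq_comm (a := 0)]
  simp

theorem sum_ite_count_cons_eq (k m j n : ℕ) :
    (∑ c : Composition n, if (m :: c.blocks).count k = j then 1 else 0) =
      if m = k then (if 1 ≤ j then cardWithCount k n (j - 1) else 0)
      else cardWithCount k n j := by
  simp only [List.count_cons, beq_iff_eq]
  split_ifs with hm hj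
  · rw [cardWithCount_eq_sum]
    refine sum_congr rfl fun c _ => ?_
    simp only [show c.blocks.count k + 1 = j ↔ c.blocks.count k = j - 1 by omega]
  · refine sum_eq_zero fun c _ => ?_
    rw [if_neg (by omega)]
  · simp [cardWithCount_eq_sum]

-- The recursion over the first part, written without subtraction.
theorem cardWithCount_add {k n : ℕ} (j : ℕ) (hk : 1 ≤ k) (hn : 0 < n) :
    cardWithCount k n j + (if k ≤ n then cardWithCount k (n - k) j else 0) =
      ∑ i ∈ range n, cardWithCount k i j +
        if k ≤ n then (if 1 ≤ j then cardWithCount k (n - k) (j - 1) else 0) else 0 := by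
  have hk_mem : k ∈ Icc 1 n ↔ k ≤ n := by simp [hk]
  set A := fun i => if 1 ≤ j then cardWithCount k i (j - 1) else 0
  set B := fun i => cardWithCount k i j
  calc cardWithCount k n j + (if k ≤ n then B (n - k) else 0)
      = ∑ m ∈ Icc 1 n, ((if m = k then A (n - m) else B (n - m)) +
          if m = k then B (n - m) else 0) := by
        rw [cardWithCount_eq_sum,
          sum_eq_sum_Icc_sum_cons hn (fun l => if l.count k = j then 1 else 0),
          sum_add_distrib, sum_ite_eq']
        simp only [sum_ite_count_cons_eq, hk_mem, A, B]
    _ = ∑ m ∈ Icc 1 n, (B (n - m) + if m = k then A (n - m) else 0) := by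
        refine sum_congr rfl fun m _ => ?_
        split_ifs <;> simp [add_comm]
    _ = ∑ i ∈ range n, B i + if k ≤ n then A (n - k) else 0 := by
        rw [sum_add_distrib, sum_ite_eq', sum_Icc_one_tsub]
        simp only [hk_mem]

/-- `Σ c_k(n, j) zⁿ wʲ`, whose constant term `1` counts the empty composition. -/
noncomputable def countGenFun (k : ℕ) : MvPowerSeries (Fin 2) ℚ :=
  fun d => cardWithCount k (d 0) (d 1)

noncomputable def partialSumsGenFun (k : ℕ) : MvPowerSeries (Fin 2) ℚ :=
  fun d => ∑ i ∈ range (d 0), cardWithCount k i (d 1)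

theorem coeff_countGenFun (k n j : ℕ) :
    coeff (Finsupp.single (0 : Fin 2) n + Finsupp.single 1 j) (countGenFun k) =
      cardWithCount k n j := by
  simp [countGenFun, coeff_apply]

theorem coeff_partialSumsGenFun (k n j : ℕ) :
    coeff (Finsupp.single (0 : Fin 2) n + Finsupp.single 1 j) (partialSumsGenFun k) =
      ∑ i ∈ range n, (cardWithCount k i j : ℚ) := by
  simp [partialSumsGenFun, coeff_apply]

theorem partialSumsGenFun_mul_one_sub_X (k : ℕ) :
    partialSumsGenFun k * (1 - X 0) = X 0 * countGenFun k := by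
  refine ext_fin_two fun n j => ?_
  rw [mul_sub, mul_one, mul_comm, map_sub, ← pow_one (X 0), coeff_X_zero_pow_mul,
    coeff_X_zero_pow_mul, coeff_partialSumsGenFun, coeff_partialSumsGenFun, coeff_countGenFun]
  cases n <;> simp [sum_range_succ]

theorem countGenFun_add {k : ℕ} (hk : 1 ≤ k) :
    countGenFun k + X 0 ^ k * countGenFun k =
      1 + partialSumsGenFun k + X 0 ^ k * (X 1 * countGenFun k) := by
  refine ext_fin_two fun n j => ?_
  simp only [map_add, coeff_X_zero_pow_mul, coeff_X_one_mul, coeff_one_fin_two,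
    coeff_countGenFun, coeff_partialSumsGenFun]
  rcases Nat.eq_zero_or_pos n with rfl | hn
  · simp [cardWithCount_zero, show ¬ k ≤ 0 by omega]
  · rw [if_neg (show ¬(n = 0 ∧ j = 0) by omega), zero_add]
    exact_mod_cast cardWithCount_add j hk hn

theorem countGenFun_sub_one_mul {k : ℕ} (hk : 1 ≤ k) :
    (countGenFun k - 1) * (1 - 2 * X 0 - (X 1 - 1) * X 0 ^ k * (1 - X 0)) =
      X 0 + (X 1 - 1) * X 0 ^ k * (1 - X 0) := by
  linear_combination (1 - X 0) * countGenFun_add hk + partialSumsGenFun_mul_one_sub_X k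

end Composition

/-- The bivariate generating function for compositions by size and by multiplicity of the
part size `k`: in `ℚ[[z,w]]`,
`Σ_{n≥1} Σ_{j≥0} c_k(n,j) z^n w^j = (z + (w−1)z^k(1−z)) (1 − 2z − (w−1)z^k(1−z))^{-1}`,
stated coefficientwise, where `c_k(n,j)` is the number of compositions of `n` in which the
part size `k` has multiplicity exactly `j`. -/
theorem bivariate_generating_function_compositions (k : ℕ) (hk : 1 ≤ k) (n j : ℕ) :
    MvPowerSeries.coeff (Finsupp.single (0 : Fin 2) n + Finsupp.single (1 : Fin 2) j)
        ((X 0 + (X 1 - 1) * (X 0) ^ k * (1 - X 0)) *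
          ((1 - 2 * X 0 - (X 1 - 1) * (X 0) ^ k * (1 - X 0) : MvPowerSeries (Fin 2) ℚ))⁻¹) =
      if 1 ≤ n then (Nat.card {κ : Composition n // κ.blocks.count k = j} : ℚ) else 0 := by
  have hD : constantCoeff (1 - 2 * X 0 - (X 1 - 1) * X 0 ^ k * (1 - X 0) :
      MvPowerSeries (Fin 2) ℚ) ≠ 0 := by
    simp [zero_pow (show k ≠ 0 by omega)]
  rw [← (MvPowerSeries.eq_mul_inv_iff_mul_eq hD).2 (Composition.countGenFun_sub_one_mul hk),
    map_sub, Composition.coeff_countGenFun, coeff_one_fin_two]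
  rcases Nat.eq_zero_or_pos n with rfl | hn
  · simp [Composition.cardWithCount_zero]
  · simp [hn.ne', Nat.one_le_iff_ne_zero.2 hn.ne', Composition.cardWithCount]
end

section
/- For every integer k ≥ 1, the polynomial Q_k(z) = 1 − 2z + z^k(1−z) has exactly one zero, counted with multiplicity, in the closed unit disk {z ∈ ℂ : |z| ≤ 1}; this zero is a simple zero, is real, and lies in the open interval (1/2, 1). -/
open Polynomial

/-!
Every zero of `Q_k` in the closed unit disk satisfies `2z - 1 = z^k (1 - z)`, hence
`|2z - 1| ≤ |1 - z|`, which confines it to `|z| ≤ 2/3`. There the zeros are the fixed points of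
`g(z) = (1 + z^k) / (2 + z^k)`, and `|g(z) - g(w)| ≤ (4/3) |z - w| / (4/3)^2` because
`k (2/3)^(k-1) ≤ 4/3`; so there is at most one zero. The intermediate value theorem on
`[1/2, 1]` produces a real zero `ρ`, and `Q_k'(ρ) = -2 + k ρ^(k-1) (1 - ρ) - ρ^k < 0`
for `ρ ∈ (1/2, 2/3]`, so it is simple.
-/

theorem natCast_mul_two_thirds_pow_pred_le (k : ℕ) : (k : ℝ) * (2 / 3) ^ (k - 1) ≤ 4 / 3 := by
  rcases k with _ | _ | k
  · norm_num
  · norm_num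
  induction k with
  | zero => norm_num
  | succ k ih =>
    have step : ((k + 3 : ℕ) : ℝ) * (2 / 3) ^ (k + 2) ≤ ((k + 2 : ℕ) : ℝ) * (2 / 3) ^ (k + 1) := by
      rw [pow_succ _ (k + 1)]
      push_cast
      nlinarith [pow_pos (by norm_num : (0 : ℝ) < 2 / 3) (k + 1)]
    exact step.trans ih

theorem norm_pow_sub_pow_le {R : Type*} [NormedCommRing R] [NormOneClass R] {z w : R} {r : ℝ}
    (hz : ‖z‖ ≤ r) (hw : ‖w‖ ≤ r) (k : ℕ) :
    ‖z ^ k - w ^ k‖ ≤ k * r ^ (k - 1) * ‖z - w‖ := by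
  rw [← geom_sum₂_mul]
  refine (norm_mul_le _ _).trans (mul_le_mul_of_nonneg_right ?_ (norm_nonneg _))
  calc ‖∑ i ∈ Finset.range k, z ^ i * w ^ (k - 1 - i)‖
      ≤ ∑ i ∈ Finset.range k, ‖z‖ ^ i * ‖w‖ ^ (k - 1 - i) := by
        refine norm_sum_le_of_le _ fun i _ => (norm_mul_le _ _).trans ?_
        exact mul_le_mul (norm_pow_le _ _) (norm_pow_le _ _) (norm_nonneg _)
          (pow_nonneg (norm_nonneg _) _)
    _ ≤ ∑ i ∈ Finset.range k, r ^ (k - 1) := by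
        refine Finset.sum_le_sum fun i hi => ?_
        rw [← pow_mul_pow_sub r (Nat.le_sub_one_of_lt (Finset.mem_range.mp hi))]
        have hr : 0 ≤ r := (norm_nonneg z).trans hz
        gcongr
    _ = k * r ^ (k - 1) := by simp

/-- The inequality `|2z - 1| ≤ |1 - z|` cuts out the closed disk with centre `1/3` and
radius `1/3`. -/
theorem Complex.norm_le_two_thirds_of_norm_two_mul_sub_one_le {z : ℂ}
    (h : ‖2 * z - 1‖ ≤ ‖1 - z‖) : ‖z‖ ≤ 2 / 3 := by
  have hsq := pow_le_pow_left₀ (norm_nonneg _) h 2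
  rw [Complex.sq_norm, Complex.sq_norm, Complex.normSq_apply, Complex.normSq_apply] at hsq
  have hnorm := Complex.sq_norm z
  rw [Complex.normSq_apply] at hnorm
  simp only [Complex.sub_re, Complex.sub_im, Complex.mul_re, Complex.mul_im, Complex.one_re,
    Complex.one_im] at hsq
  norm_num at hsq
  nlinarith [Complex.re_le_norm z, norm_nonneg z]

theorem Polynomial.rootMultiplicity_eq_one_of_not_isRoot_derivative {R : Type*} [CommRing R]
    [IsDomain R] [CharZero R] {p : R[X]} {t : R} (hroot : p.IsRoot t)
    (hderiv : ¬ (derivative p).IsRoot t) : p.rootMultiplicity t = 1 := by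
  have hp : p ≠ 0 := by rintro rfl; simp at hderiv
  have hpos := (rootMultiplicity_pos hp).mpr hroot
  have hle := mt (one_lt_rootMultiplicity_iff_isRoot hp).mp (by tauto)
  omega

theorem isRoot_Qk_iff {R : Type*} [CommRing R] (k : ℕ) (z : R) :
    (1 - 2 * X + X ^ k * (1 - X) : R[X]).IsRoot z ↔ 1 - 2 * z + z ^ k * (1 - z) = 0 := by
  simp

theorem eval_derivative_Qk {R : Type*} [CommRing R] (k : ℕ) (z : R) :
    (derivative (1 - 2 * X + X ^ k * (1 - X) : R[X])).eval z =
      -2 + k * z ^ (k - 1) * (1 - z) - z ^ k := by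
  simp [derivative_X_pow]
  ring

theorem norm_le_two_thirds_of_Qk_root {k : ℕ} {z : ℂ} (hz : ‖z‖ ≤ 1)
    (hroot : 1 - 2 * z + z ^ k * (1 - z) = 0) : ‖z‖ ≤ 2 / 3 := by
  refine Complex.norm_le_two_thirds_of_norm_two_mul_sub_one_le ?_
  rw [show 2 * z - 1 = z ^ k * (1 - z) by linear_combination -hroot, norm_mul, norm_pow]
  exact mul_le_of_le_one_left (norm_nonneg _) (pow_le_one₀ (norm_nonneg _) hz)

theorem four_thirds_le_norm_two_add_pow {k : ℕ} (hk : 1 ≤ k) {z : ℂ} (hz : ‖z‖ ≤ 2 / 3) :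
    4 / 3 ≤ ‖2 + z ^ k‖ := by
  have hzk : ‖z ^ k‖ ≤ 2 / 3 := by
    rw [norm_pow]
    exact (pow_le_of_le_one (norm_nonneg _) (by linarith) (by omega)).trans hz
  have := norm_sub_le (2 + z ^ k) (z ^ k)
  rw [add_sub_cancel_right, Complex.norm_ofNat] at this
  linarith

theorem eq_of_Qk_roots {k : ℕ} (hk : 1 ≤ k) {z w : ℂ} (hz : ‖z‖ ≤ 2 / 3) (hw : ‖w‖ ≤ 2 / 3)
    (hzroot : 1 - 2 * z + z ^ k * (1 - z) = 0) (hwroot : 1 - 2 * w + w ^ k * (1 - w) = 0) :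
    z = w := by
  have key : (z - w) * ((2 + z ^ k) * (2 + w ^ k)) = z ^ k - w ^ k := by
    linear_combination (-(2 + w ^ k)) * hzroot + (2 + z ^ k) * hwroot
  have hlower : 4 / 3 * (4 / 3) * ‖z - w‖ ≤ ‖z ^ k - w ^ k‖ := by
    rw [← key, norm_mul, norm_mul, mul_comm]
    gcongr
    exacts [four_thirds_le_norm_two_add_pow hk hz, four_thirds_le_norm_two_add_pow hk hw]
  have hupper : ‖z ^ k - w ^ k‖ ≤ 4 / 3 * ‖z - w‖ :=
    (norm_pow_sub_pow_le hz hw k).trans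
      (mul_le_mul_of_nonneg_right (natCast_mul_two_thirds_pow_pred_le k) (norm_nonneg _))
  rw [← sub_eq_zero, ← norm_le_zero_iff]
  nlinarith [norm_nonneg (z - w)]

theorem exists_Qk_root_mem_Ioo (k : ℕ) :
    ∃ ρ ∈ Set.Ioo (1 / 2 : ℝ) 1, 1 - 2 * ρ + ρ ^ k * (1 - ρ) = 0 := by
  have hcont : ContinuousOn (fun x : ℝ => 1 - 2 * x + x ^ k * (1 - x)) (Set.Icc (1 / 2) 1) := by
    fun_prop
  exact intermediate_value_Ioo' (by norm_num) hcont ⟨by norm_num, by norm_num⟩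

theorem Qk_derivative_neg {k : ℕ} {ρ : ℝ} (hρ : ρ ∈ Set.Ioc (1 / 2 : ℝ) (2 / 3)) :
    -2 + k * ρ ^ (k - 1) * (1 - ρ) - ρ ^ k < 0 := by
  obtain ⟨hlo, hhi⟩ := hρ
  have hpos : 0 < ρ := by linarith
  have hcoeff : (k : ℝ) * ρ ^ (k - 1) ≤ 4 / 3 :=
    (by gcongr : (k : ℝ) * ρ ^ (k - 1) ≤ k * (2 / 3) ^ (k - 1)).trans
      (natCast_mul_two_thirds_pow_pred_le k)
  nlinarith [pow_pos hpos k, mul_nonneg (Nat.cast_nonneg k) (pow_pos hpos (k - 1)).le]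

/-- **Lemma 2 (first part).** For `k ≥ 1`, the polynomial `Q_k(z) = 1 − 2z + z^k(1−z)` has
exactly one zero (with multiplicity) in the closed unit disk: it is a simple zero, real,
and lies in `(1/2, 1)`. -/
theorem Qk_unique_zero_in_unit_disk (k : ℕ) (hk : 1 ≤ k) :
    ∃ ρ : ℝ,
      1 / 2 < ρ ∧ ρ < 1 ∧
      (1 - 2 * X + X ^ k * (1 - X) : ℂ[X]).IsRoot (ρ : ℂ) ∧
      (1 - 2 * X + X ^ k * (1 - X) : ℂ[X]).rootMultiplicity (ρ : ℂ) = 1 ∧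
      ∀ z : ℂ, ‖z‖ ≤ 1 →
        (1 - 2 * X + X ^ k * (1 - X) : ℂ[X]).IsRoot z → z = (ρ : ℂ) := by
  obtain ⟨ρ, ⟨hρlo, hρhi⟩, hρroot⟩ := exists_Qk_root_mem_Ioo k
  have hρroot' : 1 - 2 * (ρ : ℂ) + (ρ : ℂ) ^ k * (1 - ρ) = 0 := by exact_mod_cast hρroot
  have hρnorm : ‖(ρ : ℂ)‖ = ρ := Complex.norm_of_nonneg (by linarith)
  have hρsmall := norm_le_two_thirds_of_Qk_root (hρnorm.trans_le hρhi.le) hρroot'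
  refine ⟨ρ, hρlo, hρhi, (isRoot_Qk_iff k _).mpr hρroot',
    rootMultiplicity_eq_one_of_not_isRoot_derivative ((isRoot_Qk_iff k _).mpr hρroot') ?_,
    fun z hz hzroot => ?_⟩
  · rw [IsRoot, eval_derivative_Qk]
    exact_mod_cast (Qk_derivative_neg ⟨hρlo, hρnorm.symm.trans_le hρsmall⟩).ne
  · rw [isRoot_Qk_iff] at hzroot
    exact eq_of_Qk_roots hk (norm_le_two_thirds_of_Qk_root hz hzroot) hρsmall hzroot hρroot'
end

section
/- Let ρ_k denote the unique zero of Q_k(z) = 1 − 2z + z^k(1−z) in the closed unit disk. Then ρ_k = 1/2 + 2^{-(k+2)} + O(k·2^{-2k}) as k → ∞; that is, there exist constants C and K such that |ρ_k − 1/2 − 2^{-(k+2)}| ≤ C·k/2^{2k} for all k ≥ K. -/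
/-!
Write `s = 2ρ_k` and `P = 2^{-k}`, so that `ρ_k^k = s^k P` and the equation `Q_k(ρ_k) = 0` reads
`s - 1 = s^k P (2 - s) / 2`. A crude first bound `ρ_k ≤ 2/3` gives `s - 1 ≤ (2/3)^k / 2`, which is
small against `1/k`; hence `s^k - 1 ≤ k s^k (s - 1)` forces `s^k ≤ 2`, and then `s - 1 ≤ P` and
`s^k - 1 ≤ 2kP`. Finally `ρ_k - 1/2 - P/4 = (P/4) ((s^k - 1)(2 - s) - (s - 1))`, whose size is at
most `k P² / 2`.
-/

lemma natCast_le_three_halves_pow (n : ℕ) : (n : ℝ) ≤ (3 / 2) ^ n := by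
  induction n with
  | zero => norm_num
  | succ n ih =>
    rcases Nat.lt_or_ge n 2 with hn | hn
    · interval_cases n <;> norm_num
    · have hn' : (2 : ℝ) ≤ n := by exact_mod_cast hn
      rw [pow_succ]
      push_cast
      nlinarith

lemma pow_sub_one_le_mul_pow_mul_sub_one {x : ℝ} (hx : 1 ≤ x) (n : ℕ) :
    x ^ n - 1 ≤ n * x ^ n * (x - 1) := by
  have h := abs_pow_sub_pow_le x 1 n
  rw [one_pow, abs_of_nonneg (sub_nonneg.2 (one_le_pow₀ hx)), abs_of_nonneg (sub_nonneg.2 hx),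
    abs_one, abs_of_nonneg (zero_le_one.trans hx), max_eq_left hx] at h
  calc x ^ n - 1 ≤ (x - 1) * n * x ^ (n - 1) := h
    _ ≤ (x - 1) * n * x ^ n := by
        have : 0 ≤ x - 1 := sub_nonneg.2 hx
        gcongr
        exact n.sub_le 1
    _ = n * x ^ n * (x - 1) := by ring

namespace RootQ

variable {k : ℕ} {r : ℝ}

lemma two_mul_sub_one_eq (hroot : 1 - 2 * r + r ^ k * (1 - r) = 0) :
    2 * r - 1 = (2 * r) ^ k * (1 / 2) ^ k * (2 - 2 * r) / 2 := by
  rw [← mul_pow, show 2 * r * (1 / 2) = r by ring]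
  linarith

lemma le_two_thirds (hr : 0 ≤ r) (hr1 : r < 1) (hroot : 1 - 2 * r + r ^ k * (1 - r) = 0) :
    r ≤ 2 / 3 := by
  nlinarith [pow_le_one₀ (n := k) hr hr1.le]

lemma two_mul_sub_one_le (hr : 1 / 2 < r) (hroot : 1 - 2 * r + r ^ k * (1 - r) = 0) :
    2 * r - 1 ≤ (2 * r) ^ k * (1 / 2) ^ k / 2 := by
  rw [two_mul_sub_one_eq hroot]
  have : 0 ≤ (2 * r) ^ k * (1 / 2) ^ k := by positivity
  nlinarith

lemma two_mul_pow_le_two (hr : 1 / 2 < r) (hr1 : r < 1)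
    (hroot : 1 - 2 * r + r ^ k * (1 - r) = 0) : (2 * r) ^ k ≤ 2 := by
  have hs : 1 ≤ 2 * r := by linarith
  have hsmall : (k : ℝ) * (2 * r - 1) ≤ 1 / 2 := by
    have h23 : (2 * r) ^ k * (1 / 2) ^ k ≤ (2 / 3) ^ k := by
      rw [← mul_pow]
      gcongr
      linarith [le_two_thirds (by linarith) hr1 hroot]
    have hk : (k : ℝ) * (2 / 3) ^ k ≤ 1 := by
      calc (k : ℝ) * (2 / 3) ^ k ≤ (3 / 2) ^ k * (2 / 3) ^ k := by
            gcongr; exact natCast_le_three_halves_pow k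
        _ = 1 := by rw [← mul_pow]; norm_num
    have := two_mul_sub_one_le hr hroot
    nlinarith [Nat.cast_nonneg (α := ℝ) k]
  have := pow_sub_one_le_mul_pow_mul_sub_one hs k
  nlinarith [pow_nonneg (zero_le_one.trans hs) k]

lemma two_mul_sub_one_le_half_pow (hr : 1 / 2 < r) (hr1 : r < 1)
    (hroot : 1 - 2 * r + r ^ k * (1 - r) = 0) : 2 * r - 1 ≤ (1 / 2) ^ k := by
  have := two_mul_sub_one_le hr hroot
  nlinarith [two_mul_pow_le_two hr hr1 hroot, pow_pos (one_half_pos (α := ℝ)) k]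

lemma two_mul_pow_sub_one_le (hr : 1 / 2 < r) (hr1 : r < 1)
    (hroot : 1 - 2 * r + r ^ k * (1 - r) = 0) : (2 * r) ^ k - 1 ≤ 2 * k * (1 / 2) ^ k := by
  calc (2 * r) ^ k - 1 ≤ k * (2 * r) ^ k * (2 * r - 1) :=
        pow_sub_one_le_mul_pow_mul_sub_one (by linarith) k
    _ ≤ k * 2 * (1 / 2) ^ k := by
        gcongr
        exacts [by linarith, two_mul_pow_le_two hr hr1 hroot,
          two_mul_sub_one_le_half_pow hr hr1 hroot]
    _ = 2 * k * (1 / 2) ^ k := by ring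

theorem abs_sub_half_sub_le (hk : 1 ≤ k) (hr : 1 / 2 < r) (hr1 : r < 1)
    (hroot : 1 - 2 * r + r ^ k * (1 - r) = 0) :
    |r - 1 / 2 - 1 / 2 ^ (k + 2)| ≤ k / 2 ^ (2 * k) := by
  set P : ℝ := (1 / 2) ^ k with hP
  have hP0 : 0 < P := by positivity
  have hA := two_mul_pow_sub_one_le hr hr1 hroot
  have hB := two_mul_sub_one_le_half_pow hr hr1 hroot
  have hA0 : 0 ≤ (2 * r) ^ k - 1 := sub_nonneg.2 (one_le_pow₀ (by linarith))
  have hk' : (1 : ℝ) ≤ k := by exact_mod_cast hk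
  have hsplit : r - 1 / 2 - 1 / 2 ^ (k + 2) =
      P / 4 * (((2 * r) ^ k - 1) * (2 - 2 * r) - (2 * r - 1)) := by
    have := two_mul_sub_one_eq hroot
    rw [pow_add, hP, one_div_pow] at *
    field_simp at *
    linarith
  have htarget : (k : ℝ) / 2 ^ (2 * k) = P / 4 * (4 * k * P) := by
    rw [hP, pow_mul', one_div_pow]
    field_simp
  rw [hsplit, htarget, abs_mul, abs_of_pos (by positivity)]
  gcongr
  rw [abs_le]
  constructor <;> nlinarith

end RootQ

theorem rho_asymptotics_general
    (ρ : ℕ → ℝ)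
    (hρ_mem : ∀ k, 1 ≤ k → 1 / 2 < ρ k ∧ ρ k < 1)
    (hρ_root : ∀ k, 1 ≤ k → 1 - 2 * ρ k + (ρ k) ^ k * (1 - ρ k) = 0) :
    ∃ C K : ℝ, ∀ k : ℕ, K ≤ k →
      |ρ k - 1 / 2 - 1 / 2 ^ (k + 2)| ≤ C * k / 2 ^ (2 * k) := by
  refine ⟨1, 1, fun k hk => ?_⟩
  have hk : 1 ≤ k := by exact_mod_cast hk
  rw [one_mul]
  exact RootQ.abs_sub_half_sub_le hk (hρ_mem k hk).1 (hρ_mem k hk).2 (hρ_root k hk)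

/-- **Lemma 2 (location of the root).** If `ρ k` denotes the unique zero of
`Q_k(z) = 1 − 2z + z^k(1−z)` in the closed unit disk (a real number in `(1/2, 1)`), then
`ρ_k = 1/2 + 2^{-(k+2)} + O(k 2^{-2k})` as `k → ∞`. -/
theorem rho_asymptotics
    (ρ : ℕ → ℝ)
    (hρ_mem : ∀ k, 1 ≤ k → 1 / 2 < ρ k ∧ ρ k < 1)
    (hρ_root : ∀ k, 1 ≤ k → 1 - 2 * ρ k + (ρ k) ^ k * (1 - ρ k) = 0)
    (hρ_unique : ∀ k, 1 ≤ k → ∀ z : ℂ, ‖z‖ ≤ 1 →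
      1 - 2 * z + z ^ k * (1 - z) = 0 → z = (ρ k : ℂ)) :
    ∃ C K : ℝ, ∀ k : ℕ, K ≤ k →
      |ρ k - 1 / 2 - 1 / 2 ^ (k + 2)| ≤ C * k / 2 ^ (2 * k) :=
  rho_asymptotics_general ρ hρ_mem hρ_root
end

section
/- For every integer k ≥ 1, the unique zero ρ_k of Q_k(z) = 1 − 2z + z^k(1−z) in the closed unit disk satisfies 1/(2 − 2^{-(k+1)}) < ρ_k < 1/2 + 2^{-(k+1)}. -/
/-!
On `[0, 1]` the map `x ↦ x ^ k * (1 - x)` increases by at most `y - x` from `x` to `y` (a geometric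
sum estimate), while `1 - 2x` drops by `2 (y - x)`; hence `Q_k` is strictly decreasing there and
the bounds reduce to the signs of `Q_k` at the two endpoints. With `x = 2^{-k}`,
`Q_k ((1 + x) / 2) = x ((1 + x)^k (1 - x) / 2 - 1) < 0` because `(1 + x)^k ≤ 1 / (1 - x)^k ≤ 2`
by Bernoulli's inequality. With `ε = 2^{-(k+1)}` and `b = 1 / (2 - ε)`,
`Q_k (b) = b (b^k (1 - ε) - ε) > 0` because `b > 1/2` gives `b^k > 2ε`.
-/

open Finset

def Q (k : ℕ) (x : ℝ) : ℝ := 1 - 2 * x + x ^ k * (1 - x)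

theorem pow_mul_one_sub_sub_le {x y : ℝ} (hx : 0 ≤ x) (hxy : x ≤ y) (hy : y ≤ 1) (k : ℕ) :
    y ^ k * (1 - y) - x ^ k * (1 - x) ≤ y - x := by
  have hsum : ∑ i ∈ range k, y ^ i * x ^ (k - 1 - i) ≤ ∑ i ∈ range k, y ^ i :=
    sum_le_sum fun i _ ↦
      mul_le_of_le_one_right (pow_nonneg (hx.trans hxy) i) (pow_le_one₀ hx (hxy.trans hy))
  have hdiff : (y ^ k - x ^ k) * (1 - y) ≤ (y - x) * (1 - y ^ k) :=
    calc (y ^ k - x ^ k) * (1 - y)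
        = (∑ i ∈ range k, y ^ i * x ^ (k - 1 - i)) * ((y - x) * (1 - y)) := by
          rw [← geom_sum₂_mul]; ring
      _ ≤ (∑ i ∈ range k, y ^ i) * ((y - x) * (1 - y)) :=
          mul_le_mul_of_nonneg_right hsum (mul_nonneg (by linarith) (by linarith))
      _ = (y - x) * (1 - y ^ k) := by linear_combination (x - y) * geom_sum_mul y k
  nlinarith [mul_nonneg (pow_nonneg hx k) (sub_nonneg.2 hxy),
    mul_nonneg (sub_nonneg.2 hxy) (pow_nonneg (hx.trans hxy) k)]

theorem Q_strictAntiOn (k : ℕ) : StrictAntiOn (Q k) (Set.Icc 0 1) := by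
  rintro x ⟨hx, -⟩ y ⟨-, hy⟩ hxy
  have := pow_mul_one_sub_sub_le hx hxy.le hy k
  simp only [Q]
  linarith

theorem two_mul_le_two_pow {k : ℕ} (hk : 1 ≤ k) : 2 * k ≤ 2 ^ k := by
  obtain ⟨n, rfl⟩ := Nat.exists_eq_add_of_le' hk
  have := Nat.lt_two_pow_self (n := n)
  rw [pow_succ]
  omega

theorem one_add_pow_le_two {x : ℝ} {k : ℕ} (hx : 0 ≤ x) (hx1 : x ≤ 1) (hkx : k * x ≤ 1 / 2) :
    (1 + x) ^ k ≤ 2 := by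
  have hbernoulli : 1 - k * x ≤ (1 - x) ^ k := by
    simpa [sub_eq_add_neg] using one_add_mul_le_pow (a := -x) (by linarith) k
  have hprod : (1 + x) ^ k * (1 - x) ^ k ≤ 1 := by
    rw [← mul_pow]
    exact pow_le_one₀ (by nlinarith) (by nlinarith)
  nlinarith [pow_nonneg (by linarith : (0 : ℝ) ≤ 1 + x) k]

theorem one_div_two_pow_succ_le_half (k : ℕ) : (1 : ℝ) / 2 ^ (k + 1) ≤ 1 / 2 :=
  one_div_le_one_div_of_le (by norm_num) (le_self_pow₀ (by norm_num) (by omega))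

theorem Q_half_add_neg {k : ℕ} (hk : 1 ≤ k) : Q k (1 / 2 + 1 / 2 ^ (k + 1)) < 0 := by
  set x : ℝ := 1 / 2 ^ k with hx_def
  have hx : 0 < x := by positivity
  have hkx : k * x ≤ 1 / 2 := by
    have : (2 * k : ℝ) ≤ 2 ^ k := by exact_mod_cast two_mul_le_two_pow hk
    rw [hx_def, mul_one_div, div_le_div_iff₀ (by positivity) (by norm_num)]
    linarith
  have ha : (1 : ℝ) / 2 + 1 / 2 ^ (k + 1) = (1 + x) / 2 := by
    rw [hx_def, pow_succ]; ring
  have hak : ((1 + x) / 2) ^ k = (1 + x) ^ k * x := by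
    rw [div_pow, hx_def, mul_one_div]
  have hx1 : x ≤ 1 := by
    have : (1 : ℝ) ≤ k := by exact_mod_cast hk
    nlinarith
  have hpow := one_add_pow_le_two hx.le hx1 hkx
  have hQ : Q k (1 / 2 + 1 / 2 ^ (k + 1)) = x * ((1 + x) ^ k * (1 - x) / 2 - 1) := by
    rw [Q, ha, hak]; ring
  rw [hQ]
  exact mul_neg_of_pos_of_neg hx (by nlinarith [pow_pos (by linarith : (0 : ℝ) < 1 + x) k])

theorem Q_one_div_two_sub_pos {k : ℕ} (hk : 1 ≤ k) : 0 < Q k (1 / (2 - 1 / 2 ^ (k + 1))) := by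
  set ε : ℝ := 1 / 2 ^ (k + 1) with hε_def
  have hε : 0 < ε := by positivity
  have hε2 : ε ≤ 1 / 2 := one_div_two_pow_succ_le_half k
  set b := 1 / (2 - ε) with hb_def
  have hb : 1 / 2 < b := by rw [hb_def, div_lt_div_iff₀ (by norm_num) (by linarith)]; linarith
  have hbk : 2 * ε < b ^ k := by
    calc 2 * ε = (1 / 2) ^ k := by rw [hε_def, pow_succ, one_div_pow]; ring
      _ < b ^ k := pow_lt_pow_left₀ hb (by norm_num) (by omega)
  have hd : 2 - ε ≠ 0 := by linarith
  have h2b : 1 - 2 * b = -ε * b := by rw [hb_def]; field_simp; ring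
  have h1b : 1 - b = (1 - ε) * b := by rw [hb_def]; field_simp; ring
  have hQ : Q k b = b * (b ^ k * (1 - ε) - ε) := by
    rw [Q, h1b]; linear_combination h2b
  rw [hQ]
  exact mul_pos (by linarith) (by nlinarith)

theorem rho_bounds_general
    (ρ : ℕ → ℝ)
    (hρ_mem : ∀ k, 1 ≤ k → 1 / 2 < ρ k ∧ ρ k < 1)
    (hρ_root : ∀ k, 1 ≤ k → 1 - 2 * ρ k + (ρ k) ^ k * (1 - ρ k) = 0) :
    ∀ k : ℕ, 1 ≤ k →
      1 / (2 - 1 / 2 ^ (k + 1)) < ρ k ∧ ρ k < 1 / 2 + 1 / 2 ^ (k + 1) := by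
  intro k hk
  obtain ⟨hρ_gt, hρ_lt⟩ := hρ_mem k hk
  have hQρ : Q k (ρ k) = 0 := hρ_root k hk
  have hρ : ρ k ∈ Set.Icc (0 : ℝ) 1 := ⟨by linarith, hρ_lt.le⟩
  have hε : 0 < (1 : ℝ) / 2 ^ (k + 1) := by positivity
  have hε2 := one_div_two_pow_succ_le_half k
  have hb : 1 / (2 - 1 / 2 ^ (k + 1)) ∈ Set.Icc (0 : ℝ) 1 :=
    ⟨(one_div_pos.2 (by linarith)).le, by rw [div_le_one (by linarith)]; linarith⟩
  have ha : 1 / 2 + 1 / 2 ^ (k + 1) ∈ Set.Icc (0 : ℝ) 1 := ⟨by positivity, by linarith⟩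
  constructor
  · exact ((Q_strictAntiOn k).lt_iff_gt hρ hb).mp (hQρ ▸ Q_one_div_two_sub_pos hk)
  · exact ((Q_strictAntiOn k).lt_iff_gt ha hρ).mp (hQρ ▸ Q_half_add_neg hk)

/-- **Lemma 2 (bounds for the root).** For every `k ≥ 1`, the unique zero `ρ k` of
`Q_k(z) = 1 − 2z + z^k(1−z)` in the closed unit disk satisfies
`1/(2 − 2^{-(k+1)}) < ρ_k < 1/2 + 2^{-(k+1)}`. -/
theorem rho_bounds
    (ρ : ℕ → ℝ)
    (hρ_mem : ∀ k, 1 ≤ k → 1 / 2 < ρ k ∧ ρ k < 1)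
    (hρ_root : ∀ k, 1 ≤ k → 1 - 2 * ρ k + (ρ k) ^ k * (1 - ρ k) = 0)
    (hρ_unique : ∀ k, 1 ≤ k → ∀ z : ℂ, ‖z‖ ≤ 1 →
      1 - 2 * z + z ^ k * (1 - z) = 0 → z = (ρ k : ℂ)) :
    ∀ k : ℕ, 1 ≤ k →
      1 / (2 - 1 / 2 ^ (k + 1)) < ρ k ∧ ρ k < 1 / 2 + 1 / 2 ^ (k + 1) :=
  rho_bounds_general ρ hρ_mem hρ_root
end

section
/- There is a constant C such that for all integers k ≥ 1 and n ≥ 1, | [z^n] (1−z)·(1 − 2z + z^k(1−z))^{-1} − ((1 − ρ_k)/(2 + (k+1)ρ_k^k − k ρ_k^{k-1})) · ρ_k^{-(n+1)} | ≤ C, where [z^n] denotes the coefficient of z^n in the formal power series expansion over ℚ. -/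
/-!
Subtracting from `(1 - z) / Q_k(z)` its principal part `A / (ρ - z)` at the simple pole
`ρ = ρ_k`, where `A = (1 - ρ) / D` and `D = -Q_k'(ρ) = 2 + (k + 1) ρ^k - k ρ^(k-1)`, leaves a
function `G` that is holomorphic on the closed unit disc, because `ρ` is the only zero of `Q_k`
there. Its Taylor coefficients are `[z^n] (1 - z) / Q_k(z) - A ρ^(-(n+1))`. On the unit circle
`|Q_k(z)| ≥ |1 - 2z| - |1 - z| ≥ 1/5` (as `|1 - 2z|² - |1 - z|² = 3 - 2 Re z ≥ 1`), and
`|A / (ρ - z)| ≤ 1 / D ≤ 1` because `k ρ^(k-1) (1 - ρ) ≤ 1 - ρ^k`; so `|G| ≤ 11` there, and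
Cauchy's estimate bounds every coefficient of `G` by `11`, uniformly in `k`.
-/

open PowerSeries Metric
open scoped NNReal ENNReal

theorem PowerSeries.tsum_coeff_mul_mul_pow {R : Type*} [NormedCommRing R] [CompleteSpace R]
    {f g : R⟦X⟧} {z : R} (hf : Summable fun n ↦ ‖coeff n f * z ^ n‖)
    (hg : Summable fun n ↦ ‖coeff n g * z ^ n‖) :
    ∑' n, coeff n (f * g) * z ^ n = (∑' n, coeff n f * z ^ n) * ∑' n, coeff n g * z ^ n := by
  rw [tsum_mul_tsum_eq_tsum_sum_antidiagonal_of_summable_norm hf hg]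
  refine tsum_congr fun n ↦ ?_
  rw [coeff_mul, Finset.sum_mul]
  refine Finset.sum_congr rfl fun ij hij ↦ ?_
  rw [← Finset.HasAntidiagonal.mem_antidiagonal.mp hij, pow_add]
  ring

theorem Polynomial.hasSum_coeff_mul_pow {R : Type*} [NormedRing R] (p : Polynomial R) (z : R) :
    HasSum (fun n ↦ p.coeff n * z ^ n) (p.eval z) := by
  rw [Polynomial.eval_eq_sum_range]
  exact hasSum_sum_of_ne_finset_zero fun n hn ↦ by
    rw [Polynomial.coeff_eq_zero_of_natDegree_lt (by simpa using hn), zero_mul]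

theorem Polynomial.summable_norm_coeff_mul_pow {R : Type*} [NormedRing R] (p : Polynomial R)
    (z : R) :
    Summable fun n ↦ ‖p.coeff n * z ^ n‖ :=
  summable_of_ne_finset_zero (s := Finset.range (p.natDegree + 1)) fun n hn ↦ by
    rw [Polynomial.coeff_eq_zero_of_natDegree_lt (by simpa using hn), zero_mul, norm_zero]

theorem PowerSeries.hasSum_coeff_mul_pow_of_coe_mul_eq {𝕜 : Type*} [NormedField 𝕜]
    [CompleteSpace 𝕜] {p r : Polynomial 𝕜} {f : 𝕜⟦X⟧} (h : (p : 𝕜⟦X⟧) * f = r) {z : 𝕜}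
    (hf : Summable fun n ↦ ‖coeff n f * z ^ n‖) (hp : p.eval z ≠ 0) :
    HasSum (fun n ↦ coeff n f * z ^ n) (r.eval z / p.eval z) := by
  have hmul := tsum_coeff_mul_mul_pow (f := (p : 𝕜⟦X⟧))
    (by simpa using p.summable_norm_coeff_mul_pow z) hf
  simp only [h, Polynomial.coeff_coe, (Polynomial.hasSum_coeff_mul_pow _ z).tsum_eq] at hmul
  rw [hmul, mul_div_cancel_left₀ _ hp]
  exact hf.of_norm.hasSum

theorem hasSum_div_pow_succ_mul_pow {𝕜 : Type*} [NormedField 𝕜] [CompleteSpace 𝕜] (a : 𝕜)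
    {w z : 𝕜} (h : ‖z‖ < ‖w‖) : HasSum (fun n ↦ a / w ^ (n + 1) * z ^ n) (a / (w - z)) := by
  have hw : w ≠ 0 := norm_pos_iff.mp ((norm_nonneg z).trans_lt h)
  have hzw : ‖z / w‖ < 1 := by rwa [norm_div, div_lt_one (by positivity)]
  have hwz : w - z ≠ 0 := sub_ne_zero.mpr (by rintro rfl; exact h.false)
  have hterm : (fun n ↦ a / w ^ (n + 1) * z ^ n) = fun n ↦ a / w * (z / w) ^ n := by
    ext n
    rw [div_pow, pow_succ]
    field_simp
  have hval : a / (w - z) = a / w * (1 - z / w)⁻¹ := by field_simp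
  rw [hterm, hval]
  exact (hasSum_geometric_of_norm_lt_one hzw).mul_left (a / w)

theorem hasFPowerSeriesOnBall_ofScalars_of_hasSum {c : ℕ → ℂ} {f : ℂ → ℂ} {r : ℝ≥0}
    (hr : 0 < r) (hf : ∀ z : ℂ, ‖z‖ < r → HasSum (fun n ↦ c n * z ^ n) (f z)) :
    HasFPowerSeriesOnBall f (FormalMultilinearSeries.ofScalars ℂ c) 0 r where
  r_le := by
    refine ENNReal.le_of_forall_nnreal_lt fun r' hr' ↦ ?_
    have hz : ‖(r' : ℂ)‖ < r := by simpa using hr'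
    refine FormalMultilinearSeries.le_radius_of_tendsto _ (l := 0) ?_
    simpa [FormalMultilinearSeries.ofScalars_norm] using
      (hf _ hz).summable.tendsto_atTop_zero.norm
  r_pos := by simpa using hr
  hasSum {y} hy := by
    simpa [FormalMultilinearSeries.ofScalars_apply_eq, mul_comm] using hf y (by simpa using hy)

theorem norm_le_div_pow_of_hasFPowerSeriesOnBall_ofScalars {c : ℕ → ℂ} {f : ℂ → ℂ} {r : ℝ≥0∞}
    {R C : ℝ} (hc : HasFPowerSeriesOnBall f (FormalMultilinearSeries.ofScalars ℂ c) 0 r)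
    (hR : 0 < R) (hf : DiffContOnCl ℂ f (ball 0 R)) (hC : ∀ z ∈ sphere (0 : ℂ) R, ‖f z‖ ≤ C) (n : ℕ) :
    ‖c n‖ ≤ C / R ^ n := by
  have hderiv : iteratedDeriv n f 0 = n.factorial * c n := by
    simpa [iteratedDeriv_eq_iteratedFDeriv, FormalMultilinearSeries.ofScalars_apply_eq] using
      (hc.factorial_smul 1 n).symm
  have := Complex.norm_iteratedDeriv_le_of_forall_mem_sphere_norm_le n hR hf hC
  rw [hderiv, norm_mul, Complex.norm_natCast, mul_div_assoc] at this
  exact le_of_mul_le_mul_left this (by positivity)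

theorem exists_differentiableOn_eq_div_sub_div {h Q : ℂ → ℂ} {s : Set ℂ} {ρ Q' : ℂ}
    (hh : Differentiable ℂ h) (hQ : Differentiable ℂ Q) (hQρ : Q ρ = 0)
    (hQ' : HasDerivAt Q Q' ρ) (hQ'0 : Q' ≠ 0) (hs : ∀ z ∈ s, z ≠ ρ → Q z ≠ 0) :
    ∃ G : ℂ → ℂ, DifferentiableOn ℂ G s ∧
      ∀ z ∈ s, z ≠ ρ → G z = h z / Q z - h ρ / (Q' * (z - ρ)) := by
  -- `G = dslope N ρ / dslope Q ρ`, where `N = h - (h ρ / Q') • dslope Q ρ` vanishes at `ρ`.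
  set R := dslope Q ρ with hRdef
  have hR : Differentiable ℂ R := differentiableOn_univ.mp <|
    (Complex.differentiableOn_dslope Filter.univ_mem).mpr hQ.differentiableOn
  have hRρ : R ρ = Q' := by rw [hRdef, dslope_same, hQ'.deriv]
  have hQR (z : ℂ) : Q z = (z - ρ) * R z := by
    rw [← smul_eq_mul, sub_smul_dslope, hQρ, sub_zero]
  have hRs : ∀ z ∈ s, R z ≠ 0 := by
    intro z hz
    rcases eq_or_ne z ρ with rfl | hzρ
    · rwa [hRρ]
    · exact right_ne_zero_of_mul (hQR z ▸ hs z hz hzρ)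
  set N := fun z ↦ h z - h ρ / Q' * R z
  have hN : Differentiable ℂ (dslope N ρ) := differentiableOn_univ.mp <|
    (Complex.differentiableOn_dslope Filter.univ_mem).mpr
      (hh.sub ((differentiable_const _).mul hR)).differentiableOn
  refine ⟨fun z ↦ dslope N ρ z / R z, hN.differentiableOn.div hR.differentiableOn hRs,
    fun z hz hzρ ↦ ?_⟩
  have hzρ' : z - ρ ≠ 0 := sub_ne_zero.mpr hzρ
  have hRz := hRs z hz
  simp only [dslope_of_ne _ hzρ, slope_def_field, N, hRρ, hQR]
  field_simp
  ring

theorem nat_mul_pow_pred_mul_one_sub_le (k : ℕ) {p : ℝ} (hp₀ : 0 ≤ p) (hp₁ : p ≤ 1) :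
    k * p ^ (k - 1) * (1 - p) ≤ 1 - p ^ k := by
  have hsum : (k : ℝ) * p ^ (k - 1) ≤ ∑ i ∈ Finset.range k, p ^ i := by
    simpa using Finset.card_nsmul_le_sum (Finset.range k) (p ^ ·) (p ^ (k - 1)) fun i hi ↦
      pow_le_pow_of_le_one hp₀ hp₁ (by simp at hi; omega)
  calc k * p ^ (k - 1) * (1 - p) ≤ (∑ i ∈ Finset.range k, p ^ i) * (1 - p) :=
        mul_le_mul_of_nonneg_right hsum (by linarith)
    _ = 1 - p ^ k := geom_sum_mul_neg p k

theorem one_le_two_add_succ_mul_pow_sub {k : ℕ} (hk : 1 ≤ k) {p : ℝ} (hp₀ : 0 ≤ p)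
    (hp₁ : p ≤ 1) :
    1 ≤ 2 + (k + 1) * p ^ k - k * p ^ (k - 1) := by
  have hpk : p ^ k = p ^ (k - 1) * p := by rw [← pow_succ, Nat.sub_add_cancel hk]
  nlinarith [nat_mul_pow_pred_mul_one_sub_le k hp₀ hp₁, pow_nonneg hp₀ k]

noncomputable def Qk (k : ℕ) (z : ℂ) : ℂ := 1 - 2 * z + z ^ k * (1 - z)

theorem hasDerivAt_Qk {k : ℕ} (hk : 1 ≤ k) (z : ℂ) :
    HasDerivAt (Qk k) (-(2 + (k + 1) * z ^ k - k * z ^ (k - 1))) z := by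
  have hzk : z ^ k = z ^ (k - 1) * z := by rw [← pow_succ, Nat.sub_add_cancel hk]
  refine ((((hasDerivAt_id' z).const_mul 2).const_sub 1).add
    ((hasDerivAt_pow k z).mul ((hasDerivAt_id' z).const_sub 1))).congr_deriv ?_
  rw [hzk]
  ring

theorem one_fifth_le_norm_Qk (k : ℕ) {z : ℂ} (hz : ‖z‖ = 1) : 1 / 5 ≤ ‖Qk k z‖ := by
  set u := ‖1 - 2 * z‖
  set v := ‖1 - z‖
  have hre : z.re ^ 2 + z.im ^ 2 = 1 := by
    simpa [Complex.sq_norm, Complex.normSq_apply, ← sq, hz] using (Complex.sq_norm z).symm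
  have hu : u ^ 2 = 5 - 4 * z.re := by
    simp [u, Complex.sq_norm, Complex.normSq_apply]
    nlinarith
  have hv : v ^ 2 = 2 - 2 * z.re := by
    simp [v, Complex.sq_norm, Complex.normSq_apply]
    nlinarith
  have hu3 : u ≤ 3 := (norm_sub_le _ _).trans (by simp [hz]; norm_num)
  have hv2 : v ≤ 2 := (norm_sub_le _ _).trans (by simp [hz]; norm_num)
  have hre1 : z.re ≤ 1 := by nlinarith [sq_nonneg z.im]
  calc 1 / 5 ≤ u - v := by nlinarith [norm_nonneg (1 - z), norm_nonneg (1 - 2 * z)]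
    _ = ‖1 - 2 * z‖ - ‖-(z ^ k * (1 - z))‖ := by simp [u, v, hz]
    _ ≤ ‖Qk k z‖ := by
      rw [Qk, ← sub_neg_eq_add]
      exact norm_sub_norm_le _ _

theorem norm_coeff_le_five_pow {k : ℕ} (hk : 1 ≤ k) {f : ℂ⟦X⟧}
    (hf : (1 - 2 * X + X ^ k * (1 - X) : ℂ⟦X⟧) * f = 1 - X) (n : ℕ) : ‖coeff n f‖ ≤ 5 ^ n := by
  have hrec : f = 1 - X + X ^ 1 * f + X ^ 1 * f - X ^ k * f + X ^ (k + 1) * f := by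
    linear_combination hf
  induction n using Nat.strong_induction_on with
  | _ n ih =>
    rcases n with _ | n
    · rw [hrec]
      simp [Nat.one_le_iff_ne_zero.mp hk]
    have hshift {j : ℕ} (hj : 1 ≤ j) : ‖coeff (n + 1) (X ^ j * f)‖ ≤ 5 ^ n := by
      rw [coeff_X_pow_mul']
      split_ifs
      · exact (ih _ (by omega)).trans (pow_le_pow_right₀ (by norm_num) (by omega))
      · simp
    have h1X : ‖coeff (n + 1) (1 : ℂ⟦X⟧) - coeff (n + 1) X‖ ≤ 1 := by
      rcases n with _ | n <;> simp [coeff_X]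
    have h5 : (1 : ℝ) ≤ 5 ^ n := one_le_pow₀ (by norm_num)
    rw [hrec]
    simp only [map_add, map_sub]
    grw [norm_add_le, norm_sub_le, norm_add_le, norm_add_le, h1X, hshift le_rfl, hshift hk,
      hshift (by omega : 1 ≤ k + 1), pow_succ]
    linarith

theorem norm_one_sub_div_Qk_sub_le_eleven (k : ℕ) {ρ D : ℝ} (hρ₀ : 0 ≤ ρ) (hρ₁ : ρ < 1)
    (hD : 1 ≤ D) {z : ℂ} (hz : ‖z‖ = 1) :
    ‖(1 - z) / Qk k z - ((1 - ρ) / D : ℝ) / (ρ - z)‖ ≤ 11 := by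
  have hQ := one_fifth_le_norm_Qk k hz
  have hρz : 1 - ρ ≤ ‖(ρ : ℂ) - z‖ := by
    have := norm_sub_norm_le z (ρ : ℂ)
    rw [norm_sub_rev, hz, Complex.norm_real, Real.norm_of_nonneg hρ₀] at this
    linarith
  have h1z : ‖1 - z‖ ≤ 2 := (norm_sub_le _ _).trans (by simp [hz]; norm_num)
  have hA : ‖(((1 - ρ) / D : ℝ) : ℂ)‖ = (1 - ρ) / D := by
    rw [Complex.norm_real, Real.norm_of_nonneg (div_nonneg (by linarith) (by linarith))]
  calc _ ≤ ‖1 - z‖ / ‖Qk k z‖ + (1 - ρ) / D / ‖(ρ : ℂ) - z‖ := by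
        grw [norm_sub_le, norm_div, norm_div, hA]
    _ ≤ 2 / (1 / 5) + (1 - ρ) / D / (1 - ρ) := by
        gcongr
    _ = 10 + 1 / D := by
        have : 1 - ρ ≠ 0 := by linarith
        field_simp
        ring
    _ ≤ 11 := by linarith [inv_le_one_of_one_le₀ hD, one_div D]

theorem hasSum_coeff_mul_pow_of_Qk_mul_eq {k : ℕ} (hk : 1 ≤ k) {f : ℂ⟦X⟧}
    (hf : (1 - 2 * X + X ^ k * (1 - X) : ℂ⟦X⟧) * f = 1 - X) {z : ℂ} (hz : ‖z‖ < 1 / 10)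
    (hQz : Qk k z ≠ 0) : HasSum (fun n ↦ coeff n f * z ^ n) ((1 - z) / Qk k z) := by
  have hsum : Summable fun n ↦ ‖coeff n f * z ^ n‖ := by
    refine Summable.of_nonneg_of_le (fun _ ↦ norm_nonneg _) (fun n ↦ ?_)
      (summable_geometric_of_lt_one (by norm_num) (by norm_num : (1 / 2 : ℝ) < 1))
    rw [norm_mul, norm_pow]
    calc ‖coeff n f‖ * ‖z‖ ^ n ≤ 5 ^ n * (1 / 10) ^ n := by
          gcongr
          exact norm_coeff_le_five_pow hk hf n
      _ = (1 / 2) ^ n := by rw [← mul_pow]; norm_num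
  have := hasSum_coeff_mul_pow_of_coe_mul_eq
    (p := 1 - 2 * Polynomial.X + Polynomial.X ^ k * (1 - Polynomial.X)) (r := 1 - Polynomial.X)
    -- the coercion `ℂ[X] → ℂ⟦X⟧` has no simp lemma for numerals
    (by simpa [← map_ofNat Polynomial.coeToPowerSeries.ringHom 2] using hf) hsum
    (by simpa [Qk] using hQz)
  simpa [Qk] using this

theorem norm_coeff_sub_le_eleven {k : ℕ} (hk : 1 ≤ k) {ρ : ℝ} (hρ₀ : 1 / 2 < ρ) (hρ₁ : ρ < 1)
    (hroot : Qk k ρ = 0) (huniq : ∀ z : ℂ, ‖z‖ ≤ 1 → Qk k z = 0 → z = ρ) {f : ℂ⟦X⟧}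
    (hf : (1 - 2 * X + X ^ k * (1 - X) : ℂ⟦X⟧) * f = 1 - X) (n : ℕ) :
    ‖coeff n f - ((1 - ρ) / (2 + (k + 1) * ρ ^ k - k * ρ ^ (k - 1)) : ℝ) / (ρ : ℂ) ^ (n + 1)‖
      ≤ 11 := by
  set D : ℝ := 2 + (k + 1) * ρ ^ k - k * ρ ^ (k - 1)
  have hD : 1 ≤ D := one_le_two_add_succ_mul_pow_sub hk (by linarith) hρ₁.le
  set A : ℂ := (((1 - ρ) / D : ℝ) : ℂ)
  have hρnorm : ‖(ρ : ℂ)‖ = ρ := by rw [Complex.norm_real, Real.norm_of_nonneg (by linarith)]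
  have hne {z : ℂ} (hz : ‖z‖ ≠ ρ) : z ≠ ρ := by
    rintro rfl
    exact hz hρnorm
  obtain ⟨G, hGdiff, hG⟩ := exists_differentiableOn_eq_div_sub_div (h := fun z ↦ 1 - z)
    (s := closedBall 0 1) (Q' := -D) ((differentiable_const _).sub differentiable_id)
    (fun z ↦ (hasDerivAt_Qk hk z).differentiableAt) hroot
    (by simpa [D] using hasDerivAt_Qk hk (ρ : ℂ)) (by exact_mod_cast (by linarith : -D ≠ 0))
    fun z hz hzρ h0 ↦ hzρ (huniq z (by simpa using hz) h0)
  have hG' : ∀ z ∈ closedBall (0 : ℂ) 1, z ≠ ρ → G z = (1 - z) / Qk k z - A / (ρ - z) := by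
    intro z hz hzρ
    rw [hG z hz hzρ, neg_mul, ← mul_neg, neg_sub, ← div_div]
    push_cast [A]
    rfl
  have hseries : HasFPowerSeriesOnBall G
      (FormalMultilinearSeries.ofScalars ℂ fun n ↦ coeff n f - A / (ρ : ℂ) ^ (n + 1)) 0
      (1 / 10 : ℝ≥0) := by
    refine hasFPowerSeriesOnBall_ofScalars_of_hasSum (by norm_num) fun z hz ↦ ?_
    have hz : ‖z‖ < 1 / 10 := by simpa using hz
    have hzρ : z ≠ ρ := hne (by linarith)
    rw [hG' z (by simp; linarith) hzρ]
    simpa [sub_mul] using (hasSum_coeff_mul_pow_of_Qk_mul_eq hk hf hz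
      fun h0 ↦ hzρ (huniq z (by linarith) h0)).sub
      (hasSum_div_pow_succ_mul_pow A (by rw [hρnorm]; linarith))
  have hcircle : ∀ z ∈ sphere (0 : ℂ) 1, ‖G z‖ ≤ 11 := by
    intro z hz
    have hz : ‖z‖ = 1 := by simpa using hz
    rw [hG' z (by simp [hz]) (hne (by linarith))]
    exact norm_one_sub_div_Qk_sub_le_eleven k (by linarith) hρ₁ hD hz
  have hGcl : DiffContOnCl ℂ G (ball 0 1) :=
    DifferentiableOn.diffContOnCl (by rwa [closure_ball _ one_ne_zero])
  simpa using norm_le_div_pow_of_hasFPowerSeriesOnBall_ofScalars hseries one_pos hGcl hcircle n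

/-- The coefficient `[z^n] (1−z)/(1 − 2z + z^k(1−z))` equals
`((1 − ρ_k)/(2 + (k+1)ρ_k^k − kρ_k^{k−1})) ρ_k^{-(n+1)} + O(1)`, uniformly in `k ≥ 1` and
`n ≥ 1`, where `ρ k` is the unique zero of `Q_k` in the closed unit disk. -/
theorem coeff_one_sub_div_Qk_asymptotics
    (ρ : ℕ → ℝ)
    (hρ_mem : ∀ k, 1 ≤ k → 1 / 2 < ρ k ∧ ρ k < 1)
    (hρ_root : ∀ k, 1 ≤ k → 1 - 2 * ρ k + (ρ k) ^ k * (1 - ρ k) = 0)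
    (hρ_unique : ∀ k, 1 ≤ k → ∀ z : ℂ, ‖z‖ ≤ 1 →
      1 - 2 * z + z ^ k * (1 - z) = 0 → z = (ρ k : ℂ)) :
    ∃ C : ℝ, ∀ k : ℕ, 1 ≤ k → ∀ n : ℕ, 1 ≤ n →
      |((PowerSeries.coeff n
            ((1 - X) * ((1 - 2 * X + X ^ k * (1 - X) : PowerSeries ℚ))⁻¹) : ℚ) : ℝ) -
          ((1 - ρ k) / (2 + (k + 1) * (ρ k) ^ k - k * (ρ k) ^ (k - 1))) *
            (1 / (ρ k) ^ (n + 1))| ≤ C := by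
  refine ⟨11, fun k hk n _ ↦ ?_⟩
  set Q : ℚ⟦X⟧ := 1 - 2 * X + X ^ k * (1 - X)
  set u : ℚ⟦X⟧ := (1 - X) * Q⁻¹
  have hu : Q * u = 1 - X := by
    rw [mul_left_comm, PowerSeries.mul_inv_cancel _ (by simp [Q, Nat.one_le_iff_ne_zero.mp hk]),
      mul_one]
  have huℂ : (1 - 2 * X + X ^ k * (1 - X) : ℂ⟦X⟧) * map (algebraMap ℚ ℂ) u = 1 - X := by
    simpa [Q, map_ofNat] using congrArg (map (algebraMap ℚ ℂ)) hu
  have hroot : Qk k (ρ k) = 0 := by simpa [Qk] using congrArg ((↑) : ℝ → ℂ) (hρ_root k hk)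
  have key := norm_coeff_sub_le_eleven hk (hρ_mem k hk).1 (hρ_mem k hk).2 hroot (hρ_unique k hk)
    huℂ n
  rw [coeff_map, eq_ratCast] at key
  rw [← Real.norm_eq_abs, ← Complex.norm_real]
  convert key using 2
  push_cast
  ring
end

section
/- Fix an integer m ≥ 1 and set q(n) = (log n − log log n − log(4(m+1)))/log 2. Then Σ_{1 ≤ k ≤ q(n)} P(k ∈ M_m(κ)) = O(log n / n) as n → ∞, where the sum is over integers k and P(k ∈ M_m(κ)) is the probability that the part size k has multiplicity exactly m in a uniformly random composition κ of n. -/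
/-!
Let `A(n, m)` count the compositions of `n` in which the part `k ≥ 1` has multiplicity `m`.
Splitting off the first part `a` gives `A(n, m) ≤ ∑_{a ≠ k} A(n - a, m) + A(n - k, m - 1)`, and
with `ρ = 2 - 2^{-(k+1)}` this recursion propagates `A(n, m) ρ^{mk} ≤ C(n, m) ρ^n`: the excluded
term `a = k` is what makes `∑_{1 ≤ a ≤ N, a ≠ k} ρ^{N-a} ≤ ρ^N` hold although `ρ < 2`.
Dividing by `2^{n-1}`, the probability is at most a constant times `y^m e^{-y}` with
`y = n / 2^{k+2}`, hence `O(1/n)` as soon as `y ≥ 2 log n`. This holds for every `k ≤ q(n)`,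
and there are `O(log n)` such `k`.
-/

open Finset Real Filter Asymptotics
open scoped Nat

theorem sum_Icc_filter_ne_pow_sub_le_pow {ρ : ℝ} {k : ℕ} (hρ : 1 < ρ) (hk : 1 ≤ k)
    (hρk : (2 - ρ) * ρ ^ k ≤ ρ - 1) (N : ℕ) :
    ∑ a ∈ Icc 1 N with a ≠ k, ρ ^ (N - a) ≤ ρ ^ N := by
  have h_reflect : ∑ a ∈ Icc 1 N, ρ ^ (N - a) = ∑ i ∈ range N, ρ ^ i :=
    sum_nbij' (N - ·) (N - ·) (fun a => by simp; omega) (fun i => by simp; omega)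
      (fun a => by simp; omega) (fun i => by simp; omega) fun _ _ => rfl
  have h_geom := geom_sum_mul ρ N
  rw [← h_reflect, ← sum_filter_add_sum_filter_not (Icc 1 N) (· = k), filter_eq'] at h_geom
  have hpow : ∀ j, 0 < ρ ^ j := fun j => pow_pos (by linarith) j
  -- Multiplied by `ρ - 1`, the claim becomes `(2 - ρ) ρ ^ N ≤ 1 + [k ≤ N] (ρ - 1) ρ ^ (N - k)`.
  by_cases hkN : k ≤ N
  · rw [if_pos (mem_Icc.mpr ⟨hk, hkN⟩), sum_singleton] at h_geom
    have hsplit : ρ ^ N = ρ ^ (N - k) * ρ ^ k := by rw [← pow_add, Nat.sub_add_cancel hkN]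
    have := mul_le_mul_of_nonneg_left hρk (hpow (N - k)).le
    nlinarith [hpow (N - k)]
  · rw [if_neg (by simp; omega), sum_empty, zero_add] at h_geom
    have hmono : ρ ^ N ≤ ρ ^ k := pow_le_pow_right₀ hρ.le (by omega)
    rcases le_or_gt ρ 2 with h2 | h2
    · nlinarith [mul_le_mul_of_nonneg_left hmono (by linarith : (0:ℝ) ≤ 2 - ρ), hpow N]
    · nlinarith [hpow N]

theorem sum_le_add_sum_filter_ne {α M : Type*} [DecidableEq α] [AddCommMonoid M] [PartialOrder M]
    [IsOrderedAddMonoid M] {s : Finset α} {k : α} {f g : α → M} {x : M} (hx : 0 ≤ x)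
    (hk : k ∈ s → f k ≤ x) (hf : ∀ a ∈ s, a ≠ k → f a ≤ g a) :
    ∑ a ∈ s, f a ≤ x + ∑ a ∈ s with a ≠ k, g a := by
  rw [← sum_filter_add_sum_filter_not s (· = k), filter_eq']
  gcongr with a ha
  · split_ifs with hks
    · simpa using hk hks
    · simpa using hx
  · exact hf a (mem_filter.mp ha).1 (mem_filter.mp ha).2

theorem one_div_two_pow_add_two_le (k : ℕ) : (1 / 2 ^ (k + 2) : ℝ) ≤ 1 / 4 :=
  one_div_le_one_div_of_le (by norm_num) (by
    rw [pow_add]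
    nlinarith [one_le_pow₀ (one_le_two : (1 : ℝ) ≤ 2) (n := k)])

theorem three_quarters_le_one_sub_pow (k : ℕ) : 3 / 4 ≤ (1 - 1 / 2 ^ (k + 2) : ℝ) ^ k := by
  have hk : (k : ℝ) < 2 ^ k := mod_cast Nat.lt_two_pow_self
  have hkt : k * (1 / 2 ^ (k + 2) : ℝ) ≤ 1 / 4 := by
    rw [pow_add]
    field_simp
    linarith
  have hbernoulli := one_add_mul_le_pow (a := -(1 / 2 ^ (k + 2) : ℝ))
    (by linarith [one_div_two_pow_add_two_le k]) k
  rw [← sub_eq_add_neg] at hbernoulli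
  linarith

theorem two_sub_mul_pow_le_sub_one (k : ℕ) :
    (2 - 2 * (1 - 1 / 2 ^ (k + 2))) * (2 * (1 - 1 / 2 ^ (k + 2))) ^ k ≤
      2 * (1 - 1 / 2 ^ (k + 2) : ℝ) - 1 := by
  have ht := one_div_two_pow_add_two_le k
  have ht0 : (0 : ℝ) < 1 / 2 ^ (k + 2) := by positivity
  have h4t : 4 * 2 ^ k * (1 / 2 ^ (k + 2) : ℝ) = 1 := by field_simp; ring
  have hρ : (2 * (1 - 1 / 2 ^ (k + 2) : ℝ)) ^ k ≤ 2 ^ k :=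
    pow_le_pow_left₀ (by linarith) (by linarith) k
  nlinarith

theorem pow_mul_exp_neg_le {y : ℝ} (hy : 0 ≤ y) (m : ℕ) :
    y ^ m * exp (-y) ≤ m ! * 2 ^ m * exp (-(y / 2)) := by
  have h := pow_div_factorial_le_exp (x := y / 2) (by positivity) m
  rw [div_le_iff₀ (by positivity)] at h
  calc y ^ m * exp (-y) = 2 ^ m * (y / 2) ^ m * exp (-y) := by rw [← mul_pow]; ring_nf
    _ ≤ 2 ^ m * (exp (y / 2) * m !) * exp (-y) := by gcongr
    _ = m ! * 2 ^ m * exp (-(y / 2)) := by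
      rw [show -(y / 2) = y / 2 + -y by ring, exp_add]
      ring

theorem two_pow_mul_log_le_of_le_floor {n c : ℝ} (hn : 1 < n) (hc : 0 < c) {k : ℕ}
    (hk0 : k ≠ 0) (hk : k ≤ ⌊(log n - log (log n) - log c) / log 2⌋₊) :
    2 ^ k * (c * log n) ≤ n := by
  have hlogn : 0 < log n := log_pos hn
  rw [Nat.le_floor_iff' hk0, le_div_iff₀ (log_pos one_lt_two)] at hk
  have hlog : log (2 ^ k) ≤ log (n / (c * log n)) := by
    rw [log_pow, log_div (by positivity) (by positivity), log_mul hc.ne' hlogn.ne']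
    linarith
  rwa [log_le_log_iff (by positivity) (by positivity), le_div_iff₀ (by positivity)] at hlog

theorem floor_le_two_mul_log {n c : ℝ} (hn : 2 ≤ n) (hc : 2 ≤ c) :
    (⌊(log n - log (log n) - log c) / log 2⌋₊ : ℝ) ≤ 2 * log n := by
  set K := ⌊(log n - log (log n) - log c) / log 2⌋₊
  have hlog2 := log_two_gt_d9
  have hlogn : log 2 ≤ log n := log_le_log (by norm_num) hn
  rcases Nat.eq_zero_or_pos K with hK | hK
  · rw [hK, Nat.cast_zero]
    linarith
  have h := two_pow_mul_log_le_of_le_floor (by linarith) (by linarith) hK.ne' le_rfl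
  have h2K : log (2 ^ K) ≤ log n :=
    log_le_log (by positivity) (le_trans (le_mul_of_one_le_right (by positivity) (by nlinarith)) h)
  rw [log_pow] at h2K
  nlinarith

namespace Composition

def blocksFinset (n : ℕ) : Finset (List ℕ) := univ.image (blocks (n := n))

theorem mem_blocksFinset {n : ℕ} {l : List ℕ} :
    l ∈ blocksFinset n ↔ (∀ x ∈ l, 0 < x) ∧ l.sum = n := by
  constructor
  · intro hl
    obtain ⟨κ, -, rfl⟩ := mem_image.mp hl
    exact ⟨fun _ => κ.blocks_pos, κ.blocks_sum⟩
  · rintro ⟨hpos, hsum⟩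
    exact mem_image.mpr ⟨⟨l, hpos _, hsum⟩, mem_univ _, rfl⟩

theorem blocksFinset_zero : blocksFinset 0 = {[]} := by
  ext l
  rw [mem_blocksFinset, mem_singleton]
  constructor
  · rintro ⟨hpos, hsum⟩
    exact List.eq_nil_iff_forall_not_mem.mpr fun x hx =>
      (hpos x hx).ne' (List.sum_eq_zero_iff.mp hsum x hx)
  · rintro rfl
    simp

theorem blocksFinset_succ_subset (n : ℕ) :
    blocksFinset (n + 1) ⊆
      (Icc 1 (n + 1)).biUnion fun a => (blocksFinset (n + 1 - a)).image (List.cons a) := by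
  intro l hl
  obtain ⟨hpos, hsum⟩ := mem_blocksFinset.mp hl
  cases l with
  | nil => simp at hsum
  | cons a t =>
    have ha : 0 < a := hpos a List.mem_cons_self
    rw [List.sum_cons] at hsum
    simp only [mem_biUnion, mem_Icc, mem_image, mem_blocksFinset, List.cons.injEq]
    exact ⟨a, ⟨ha, by omega⟩, t,
      ⟨fun x hx => hpos x (List.mem_cons_of_mem a hx), by omega⟩, rfl, rfl⟩

theorem natCard_count_eq_card_filter (n k m : ℕ) :
    Nat.card {κ : Composition n // κ.blocks.count k = m} =
      #{l ∈ blocksFinset n | l.count k = m} := by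
  rw [Nat.card_eq_fintype_card, Fintype.card_subtype, blocksFinset, filter_image,
    card_image_of_injective _ fun _ _ => Composition.ext]

theorem card_filter_count_succ_le (n k m : ℕ) :
    #{l ∈ blocksFinset (n + 1) | l.count k = m} ≤
      ∑ a ∈ Icc 1 (n + 1), #{l ∈ blocksFinset (n + 1 - a) | (a :: l).count k = m} := by
  refine (card_le_card (filter_subset_filter _ (blocksFinset_succ_subset n))).trans ?_
  rw [filter_biUnion]
  refine card_biUnion_le.trans (sum_le_sum fun a _ => le_of_eq ?_)
  rw [filter_image, card_image_of_injective _ List.cons_injective]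

theorem card_filter_count_mul_pow_le {k : ℕ} {ρ : ℝ} (hρ : 0 ≤ ρ)
    (hgeom : ∀ N, ∑ a ∈ Icc 1 N with a ≠ k, ρ ^ (N - a) ≤ ρ ^ N) (n m : ℕ) :
    (#{l ∈ blocksFinset n | l.count k = m} : ℝ) * ρ ^ (m * k) ≤ n.choose m * ρ ^ n := by
  induction n using Nat.strong_induction_on generalizing m with
  | _ n ih =>
  cases n with
  | zero => rcases m with _ | m <;> simp [blocksFinset_zero, filter_singleton]
  | succ n =>
  set T : ℕ → ℝ := fun a => #{l ∈ blocksFinset (n + 1 - a) | (a :: l).count k = m}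
  have h_ne : ∀ a ∈ Icc 1 (n + 1), a ≠ k →
      T a * ρ ^ (m * k) ≤ n.choose m * ρ ^ (n + 1 - a) := by
    intro a ha hak
    have ha' := mem_Icc.mp ha
    have hcount : ∀ l : List ℕ, (a :: l).count k = l.count k := fun _ =>
      List.count_cons_of_ne hak
    simp only [T, hcount]
    calc _ ≤ ((n + 1 - a).choose m : ℝ) * ρ ^ (n + 1 - a) := ih (n + 1 - a) (by omega) m
      _ ≤ n.choose m * ρ ^ (n + 1 - a) := by
        gcongr
        omega
  have h_eq : k ∈ Icc 1 (n + 1) →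
      T k * ρ ^ (m * k) ≤ ((n + 1).choose m - n.choose m) * ρ ^ (n + 1) := by
    intro hk
    have hk' := mem_Icc.mp hk
    rcases m with _ | m
    · simp [T]
    have hcount : ∀ l : List ℕ, (k :: l).count k = m + 1 ↔ l.count k = m := fun l => by simp
    simp only [T, hcount, Nat.choose_succ_succ, Nat.cast_add, add_sub_cancel_right]
    calc _ = (#{l ∈ blocksFinset (n + 1 - k) | l.count k = m} : ℝ) * ρ ^ (m * k) * ρ ^ k := by
          ring
      _ ≤ ((n + 1 - k).choose m : ℝ) * ρ ^ (n + 1 - k) * ρ ^ k := by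
          exact mul_le_mul_of_nonneg_right (ih (n + 1 - k) (by omega) m) (by positivity)
      _ ≤ n.choose m * ρ ^ (n + 1) := by
          rw [mul_assoc, ← pow_add, Nat.sub_add_cancel hk'.2]
          gcongr
          omega
  -- Pascal: `(n + 1).choose m - n.choose m` is `n.choose (m - 1)`, or `0` when `m = 0`.
  have h_choose : (0 : ℝ) ≤ ((n + 1).choose m - n.choose m) * ρ ^ (n + 1) :=
    mul_nonneg (sub_nonneg.mpr (mod_cast Nat.choose_le_choose m n.le_succ)) (by positivity)
  calc (#{l ∈ blocksFinset (n + 1) | l.count k = m} : ℝ) * ρ ^ (m * k)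
      ≤ ∑ a ∈ Icc 1 (n + 1), T a * ρ ^ (m * k) := by
        rw [← sum_mul]
        gcongr
        simp only [T]
        exact_mod_cast card_filter_count_succ_le n k m
    _ ≤ ((n + 1).choose m - n.choose m) * ρ ^ (n + 1) +
          ∑ a ∈ Icc 1 (n + 1) with a ≠ k, n.choose m * ρ ^ (n + 1 - a) :=
        sum_le_add_sum_filter_ne h_choose h_eq h_ne
    _ ≤ ((n + 1).choose m - n.choose m) * ρ ^ (n + 1) + n.choose m * ρ ^ (n + 1) := by
        rw [← mul_sum]
        gcongr
        exact hgeom (n + 1)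
    _ = (n + 1).choose m * ρ ^ (n + 1) := by ring

theorem natCard_count_mul_le {k n : ℕ} (hk : 1 ≤ k) (m : ℕ) :
    (Nat.card {κ : Composition n // κ.blocks.count k = m} : ℝ) * (3 * 2 ^ k / 4) ^ m ≤
      2 ^ n * n ^ m * (1 - 1 / 2 ^ (k + 2)) ^ n := by
  set ρ : ℝ := 2 * (1 - 1 / 2 ^ (k + 2))
  have hρ1 : 1 < ρ := by linarith [one_div_two_pow_add_two_le k]
  have hρmk : (3 * 2 ^ k / 4) ^ m ≤ ρ ^ (m * k) := by
    have h2k : (0 : ℝ) < 2 ^ k := by positivity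
    have := three_quarters_le_one_sub_pow k
    rw [mul_comm m k, pow_mul, mul_pow]
    exact pow_le_pow_left₀ (by positivity) (by nlinarith) m
  have hcount := card_filter_count_mul_pow_le (by linarith)
    (sum_Icc_filter_ne_pow_sub_le_pow hρ1 hk (two_sub_mul_pow_le_sub_one k)) n m
  rw [← natCard_count_eq_card_filter] at hcount
  calc _ ≤ (Nat.card {κ : Composition n // κ.blocks.count k = m} : ℝ) * ρ ^ (m * k) := by
        gcongr
    _ ≤ n.choose m * ρ ^ n := hcount
    _ ≤ n ^ m * ρ ^ n := by gcongr; exact_mod_cast Nat.choose_le_pow n m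
    _ = 2 ^ n * n ^ m * (1 - 1 / 2 ^ (k + 2)) ^ n := by rw [mul_pow]; ring

theorem natCard_count_div_le {k n : ℕ} (hk : 1 ≤ k) (hn : 1 ≤ n) (m : ℕ) :
    (Nat.card {κ : Composition n // κ.blocks.count k = m} : ℝ) / 2 ^ (n - 1) ≤
      2 * (16 / 3) ^ m * (n * (1 / 2 ^ (k + 2))) ^ m * (1 - 1 / 2 ^ (k + 2)) ^ n := by
  have h4t : 4 * 2 ^ k * (1 / 2 ^ (k + 2) : ℝ) = 1 := by field_simp; ring
  have hscale : (16 / 3 * (n * (1 / 2 ^ (k + 2))) * (3 * 2 ^ k / 4)) ^ m = (n : ℝ) ^ m := by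
    congr 1
    linear_combination (n : ℝ) * h4t
  have h2 : (2 : ℝ) ^ n = 2 * 2 ^ (n - 1) := by rw [← pow_succ']; congr 1; omega
  rw [div_le_iff₀ (by positivity)]
  refine le_of_mul_le_mul_right ((natCard_count_mul_le hk m).trans_eq ?_)
    (by positivity : (0 : ℝ) < (3 * 2 ^ k / 4) ^ m)
  rw [← hscale, h2, mul_pow, mul_pow]
  ring

theorem natCard_count_div_le_of_two_pow_mul_log_le {k n : ℕ} (hk : 1 ≤ k) (hn : 1 ≤ n)
    (m : ℕ) (h : 2 ^ (k + 2) * (2 * Real.log n) ≤ n) :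
    (Nat.card {κ : Composition n // κ.blocks.count k = m} : ℝ) / 2 ^ (n - 1) ≤
      2 * (32 / 3) ^ m * m ! / n := by
  set t : ℝ := 1 / 2 ^ (k + 2)
  set y : ℝ := n * t
  have hn0 : (0 : ℝ) < n := mod_cast hn
  have hy : 2 * Real.log n ≤ y := by
    rw [← le_div_iff₀' (by positivity)] at h
    simpa only [y, t, mul_one_div] using h
  have ht1 : t ≤ 1 := div_le_one_of_le₀ (one_le_pow₀ one_le_two) (by positivity)
  have hexp : (1 - t) ^ n ≤ exp (-y) := by
    calc (1 - t) ^ n ≤ exp (-t) ^ n :=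
          pow_le_pow_left₀ (sub_nonneg.mpr ht1) (one_sub_le_exp_neg t) n
      _ = exp (-y) := by rw [← exp_nat_mul, mul_neg]
  have hlog : exp (-(y / 2)) ≤ 1 / n := by
    calc exp (-(y / 2)) ≤ exp (-Real.log n) := exp_le_exp.mpr (by linarith)
      _ = 1 / n := by rw [exp_neg, exp_log hn0, one_div]
  calc (Nat.card {κ : Composition n // κ.blocks.count k = m} : ℝ) / 2 ^ (n - 1)
      ≤ 2 * (16 / 3) ^ m * y ^ m * (1 - t) ^ n := natCard_count_div_le hk hn m
    _ ≤ 2 * (16 / 3) ^ m * (y ^ m * exp (-y)) := by rw [← mul_assoc]; gcongr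
    _ ≤ 2 * (16 / 3) ^ m * (m ! * 2 ^ m * exp (-(y / 2))) := by
        gcongr ?_ * ?_
        exact pow_mul_exp_neg_le (by positivity) m
    _ ≤ 2 * (16 / 3) ^ m * (m ! * 2 ^ m * (1 / n)) := by gcongr
    _ = 2 * (32 / 3) ^ m * m ! / n := by
        rw [show (32 / 3 : ℝ) = 16 / 3 * 2 by norm_num, mul_pow]
        ring

end Composition

/-- For fixed `m ≥ 1`, with `q(n) = (log n − log log n − log(4(m+1)))/log 2`, the total
probability `Σ_{1 ≤ k ≤ q(n)} P(k ∈ M_m(κ))` is `O(log n / n)` as `n → ∞`. -/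
theorem sum_prob_small_k_isBigO (m : ℕ) (hm : 1 ≤ m) :
    (fun n : ℕ =>
        ∑ k ∈ Finset.Icc 1
            ⌊(Real.log n - Real.log (Real.log n) - Real.log (4 * (m + 1))) / Real.log 2⌋₊,
          (Nat.card {κ : Composition n // κ.blocks.count k = m} : ℝ) / 2 ^ (n - 1)) =O[atTop]
      fun n : ℕ => Real.log n / n := by
  set C : ℝ := 2 * (32 / 3) ^ m * (m !)
  refine IsBigO.of_bound (2 * C) ?_
  filter_upwards [eventually_ge_atTop 2] with n hn
  set K := ⌊(Real.log n - Real.log (Real.log n) - Real.log (4 * (m + 1))) / Real.log 2⌋₊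
  have hn2 : (2 : ℝ) ≤ n := mod_cast hn
  have hc : (8 : ℝ) ≤ 4 * (m + 1) := by
    have : (1 : ℝ) ≤ m := mod_cast hm
    linarith
  have hterm : ∀ k ∈ Icc 1 K,
      (Nat.card {κ : Composition n // κ.blocks.count k = m} : ℝ) / 2 ^ (n - 1) ≤ C / n := by
    intro k hk
    obtain ⟨hk1, hkK⟩ := mem_Icc.mp hk
    refine Composition.natCard_count_div_le_of_two_pow_mul_log_le hk1 (by omega) m ?_
    calc (2 : ℝ) ^ (k + 2) * (2 * Real.log n) = 2 ^ k * (8 * Real.log n) := by ring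
      _ ≤ 2 ^ k * (4 * (m + 1) * Real.log n) := by gcongr
      _ ≤ n := two_pow_mul_log_le_of_le_floor (by linarith) (by linarith) (by omega) hkK
  rw [norm_of_nonneg (sum_nonneg fun _ _ => by positivity), norm_of_nonneg (by positivity)]
  calc _ ≤ ∑ _k ∈ Icc 1 K, C / n := sum_le_sum hterm
    _ = K * (C / n) := by simp
    _ ≤ 2 * Real.log n * (C / n) := by gcongr; exact floor_le_two_mul_log hn2 (by linarith)
    _ = 2 * C * (Real.log n / n) := by ring
end
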